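/- arXiv:2411.11084 — 6 statements merged into one kernel-verified Lean document; each statement's English description precedes it below -/
import Mathlib

section
/- Lemma (paper Lemma 6.3, auxiliary torsion-control lemma). In the situation of the context, fix an integer n ≥ 0 and for each m set C_m := Fil_m M / (θ − n)(Fil_m M) (well defined since θ − n preserves Fil_m M). Then: (1) there is a left exact sequence 0 → {x ∈ Fil_n M : θ(x) = n·x} → gr_n M → C_{n−1}, where the first map is induced by the projection Fil_n M → gr_n M and the second by x ↦ class of (θ − n)(x); (2) for every integer m with p ∤ (n − m), the inclusion Fil_{m−1} M ⊆ Fil_m M induces an isomorphism C_{m−1} ≅ C_m; in particular C_{n−bp−1} = C_{n−bp−2} = … = C_{n−bp−p} for every b; (3) for every integer b ≥ 0 there is a right exact sequence C_{n−bp−p} → C_{n−bp} → gr_{n−bp} M / (bp)·gr_{n−bp} M → 0, the maps being induced by the inclusion of filtration steps and the projection to the graded piece. -/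
/-!
Everything rests on the identity `(n - m) • x = (θ - m) x - (θ - n) x`, whose first term lies
in `Fil_{m-1}` when `x ∈ Fil_m`. If `n - m` is a unit, i.e. `p ∤ n - m`, it shows that
`Fil_m ⊆ Fil_{m-1} + (θ - n)(Fil_m)`, and that `x ∈ Fil_m` with `(θ - n) x ∈ Fil_{m-1}`
already lies in `Fil_{m-1}`; this gives (2), and iterating it over the `p - 1` degrees strictly
between `n - bp - p` and `n - bp` gives (3). For (1), `n - m` is only known to be nonzero when
`m < n`, which in a torsion-free module over a ring of characteristic `0` still forces an
eigenvector of eigenvalue `n` in `Fil_{n-1}` to vanish, by induction on the degree starting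
from `Fil_{-1} = 0`.
-/

open Submodule

noncomputable section

namespace FilSen

variable {R : Type*} [CommRing R] {M : Type*} [AddCommGroup M] [Module R M]

/-- `gr_n M = Fil_n M / Fil_{n-1} M`. -/
abbrev grQ (Fil : ℤ → Submodule R M) (n : ℤ) :=
  ↥(Fil n) ⧸ Submodule.comap (Fil n).subtype (Fil (n - 1))

/-- `C_m = Fil_m M / (θ - n)(Fil_m M)`. -/
abbrev CQ (Fil : ℤ → Submodule R M) (θ : M →ₗ[R] M) (n m : ℤ) :=
  ↥(Fil m) ⧸ Submodule.comap (Fil m).subtype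
    (Submodule.map (θ - (n : R) • (LinearMap.id : M →ₗ[R] M)) (Fil m))

end FilSen

open FilSen

namespace FilSen

lemma isUnit_intCast_of_not_dvd {R : Type*} [CommRing R] [IsLocalRing R] {p : ℕ}
    (hp : p.Prime) (hpR : ¬IsUnit (p : R)) {c : ℤ} (hc : ¬(p : ℤ) ∣ c) :
    IsUnit (c : R) := by
  obtain ⟨a, b, hab⟩ :=
    ((Nat.prime_iff_prime_int.mp hp).coprime_iff_not_dvd.mpr hc).intCast (R := R)
  rcases IsLocalRing.isUnit_or_isUnit_of_add_one hab with h | h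
  · exact absurd (isUnit_of_mul_isUnit_right h) (by exact_mod_cast hpR)
  · exact isUnit_of_mul_isUnit_right h

section QuotientInclusion

variable {R M : Type*} [CommRing R] [AddCommGroup M] [Module R M] {A B X Y : Submodule R M}
  {hAB : A ≤ B} {f : A ⧸ X.comap A.subtype →ₗ[R] B ⧸ Y.comap B.subtype}

lemma mk_mem_range_of_mem_sup
    (hf : ∀ x, f (Submodule.Quotient.mk x) = Submodule.Quotient.mk (inclusion hAB x))
    {b : B} (hb : (b : M) ∈ A ⊔ Y) : Submodule.Quotient.mk b ∈ LinearMap.range f := by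
  obtain ⟨a, ha, y, hy, hay⟩ := mem_sup.mp hb
  refine ⟨Submodule.Quotient.mk ⟨a, ha⟩, ?_⟩
  rw [hf, Submodule.Quotient.eq, mem_comap]
  simpa [← hay] using neg_mem hy

lemma surjective_of_le_sup
    (hf : ∀ x, f (Submodule.Quotient.mk x) = Submodule.Quotient.mk (inclusion hAB x))
    (h : B ≤ A ⊔ Y) : Function.Surjective f := by
  intro c
  obtain ⟨b, rfl⟩ := Submodule.Quotient.mk_surjective _ c
  exact mk_mem_range_of_mem_sup hf (h b.2)

lemma injective_of_inf_le
    (hf : ∀ x, f (Submodule.Quotient.mk x) = Submodule.Quotient.mk (inclusion hAB x))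
    (h : A ⊓ Y ≤ X) : Function.Injective f := by
  rw [← LinearMap.ker_eq_bot, eq_bot_iff]
  intro c hc
  obtain ⟨a, rfl⟩ := Submodule.Quotient.mk_surjective _ c
  rw [LinearMap.mem_ker, hf, Submodule.Quotient.mk_eq_zero, mem_comap] at hc
  exact (Submodule.Quotient.mk_eq_zero _).mpr (h ⟨a.2, hc⟩)

end QuotientInclusion

section Filtration

variable {R M : Type*} [CommRing R] [AddCommGroup M] [Module R M] {Fil : ℤ → Submodule R M}
  {θ : M →ₗ[R] M}

variable (Fil θ) in
def ActsByDegreeOnGr : Prop :=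
  ∀ n : ℤ, ∀ x ∈ Fil n, θ x - (n : R) • x ∈ Fil (n - 1)

lemma intCast_sub_smul_eq (n m : ℤ) (x : M) :
    ((n - m : ℤ) : R) • x =
      (θ x - (m : R) • x) - (θ - (n : R) • LinearMap.id : M →ₗ[R] M) x := by
  simp only [LinearMap.sub_apply, LinearMap.smul_apply, LinearMap.id_apply, Int.cast_sub,
    sub_smul]
  abel

lemma intCast_sub_smul_mem_sup_map (hGT : ActsByDegreeOnGr Fil θ) (n : ℤ) {m : ℤ} {x : M}
    (hx : x ∈ Fil m) :
    ((n - m : ℤ) : R) • x ∈ Fil (m - 1) ⊔ (Fil m).map (θ - (n : R) • LinearMap.id) := by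
  rw [intCast_sub_smul_eq]
  exact sub_mem (mem_sup_left (hGT m x hx)) (mem_sup_right (mem_map_of_mem hx))

lemma fil_le_sup_map_of_isUnit (hGT : ActsByDegreeOnGr Fil θ) {n m : ℤ}
    (hu : IsUnit ((n - m : ℤ) : R)) :
    Fil m ≤ Fil (m - 1) ⊔ (Fil m).map (θ - (n : R) • LinearMap.id) := fun _ hx ↦
  (smul_mem_iff_of_isUnit _ hu).mp (intCast_sub_smul_mem_sup_map hGT n hx)

lemma fil_le_sup_map_of_forall_isUnit (hGT : ActsByDegreeOnGr Fil θ) (hmono : Monotone Fil)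
    {n j i : ℤ} (hji : j ≤ i) (hu : ∀ k, j < k → k ≤ i → IsUnit ((n - k : ℤ) : R)) :
    Fil i ≤ Fil j ⊔ (Fil i).map (θ - (n : R) • LinearMap.id) := by
  induction i, hji using Int.leInduction with
  | base => exact le_sup_left
  | succ i hji ih =>
    have hstep := fil_le_sup_map_of_isUnit hGT (hu (i + 1) (by omega) le_rfl)
    rw [add_sub_cancel_right] at hstep
    refine hstep.trans (sup_le ?_ le_sup_right)
    exact (ih fun k hjk hki ↦ hu k hjk (by omega)).trans
      (sup_le_sup_left (map_mono (hmono (by omega))) _)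

lemma fil_pred_inf_map_le_map_of_isUnit (hGT : ActsByDegreeOnGr Fil θ) {n m : ℤ}
    (hu : IsUnit ((n - m : ℤ) : R)) :
    Fil (m - 1) ⊓ (Fil m).map (θ - (n : R) • LinearMap.id) ≤
      (Fil (m - 1)).map (θ - (n : R) • LinearMap.id) := by
  rintro _ ⟨hx, z, hz, rfl⟩
  refine mem_map_of_mem ((smul_mem_iff_of_isUnit _ hu).mp ?_)
  rw [intCast_sub_smul_eq]
  exact sub_mem (hGT m z hz) hx

lemma fil_inf_ker_eq_bot [IsDomain R] [CharZero R] [Module.IsTorsionFree R M]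
    (hGT : ActsByDegreeOnGr Fil θ) (hbot : ∀ n : ℤ, n < 0 → Fil n = ⊥) {n m : ℤ}
    (hmn : m < n) : Fil m ⊓ LinearMap.ker (θ - (n : R) • LinearMap.id) = ⊥ := by
  obtain hm | hm := lt_or_ge m (-1)
  · rw [hbot m (by omega), bot_inf_eq]
  induction m, hm using Int.leInduction with
  | base => rw [hbot (-1) (by norm_num), bot_inf_eq]
  | succ m _ ih =>
    rw [eq_bot_iff]
    intro x hx
    obtain ⟨hx, hTx⟩ := mem_inf.mp hx
    rw [LinearMap.mem_ker] at hTx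
    have hsmul : ((n - (m + 1) : ℤ) : R) • x ∈
        Fil m ⊓ LinearMap.ker (θ - (n : R) • LinearMap.id) := by
      refine mem_inf.mpr ⟨?_, by rw [LinearMap.mem_ker, map_smul, hTx, smul_zero]⟩
      rw [intCast_sub_smul_eq (θ := θ), hTx, sub_zero]
      simpa using hGT _ x hx
    rw [ih (by omega), mem_bot, smul_eq_zero, Int.cast_eq_zero] at hsmul
    exact hsmul.resolve_left (by omega)

lemma injective_ker_to_grQ [IsDomain R] [CharZero R] [Module.IsTorsionFree R M]
    (hGT : ActsByDegreeOnGr Fil θ) (hbot : ∀ n : ℤ, n < 0 → Fil n = ⊥) (n : ℤ) :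
    Function.Injective ((mkQ (comap (Fil n).subtype (Fil (n - 1)))).comp
      (comap (Fil n).subtype (LinearMap.ker (θ - (n : R) • LinearMap.id))).subtype) := by
  rw [← LinearMap.ker_eq_bot, eq_bot_iff]
  rintro ⟨⟨x, hxn⟩, hxT⟩ hx
  rw [LinearMap.mem_ker, LinearMap.comp_apply, mkQ_apply, Submodule.Quotient.mk_eq_zero,
    mem_comap] at hx
  have hx0 : x = 0 := by
    rw [← mem_bot R, ← fil_inf_ker_eq_bot hGT hbot (sub_one_lt n)]
    exact mem_inf.mpr ⟨hx, hxT⟩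
  subst hx0
  rfl

lemma range_ker_to_grQ_eq_ker (hmono : Monotone Fil) (hGT : ActsByDegreeOnGr Fil θ) {n : ℤ}
    {g : grQ Fil n →ₗ[R] CQ Fil θ n (n - 1)}
    (hg : ∀ x : Fil n, g (Submodule.Quotient.mk x) =
      Submodule.Quotient.mk (⟨θ x - (n : R) • x, hGT n x x.2⟩ : Fil (n - 1))) :
    LinearMap.range ((mkQ (comap (Fil n).subtype (Fil (n - 1)))).comp
      (comap (Fil n).subtype (LinearMap.ker (θ - (n : R) • LinearMap.id))).subtype) =
      LinearMap.ker g := by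
  ext c
  obtain ⟨x, rfl⟩ := Submodule.Quotient.mk_surjective _ c
  rw [LinearMap.mem_ker, hg, Submodule.Quotient.mk_eq_zero, mem_comap]
  constructor
  · rintro ⟨⟨z, hzT⟩, hz⟩
    have hzx : (z : M) - x ∈ Fil (n - 1) :=
      (Submodule.Quotient.eq (comap (Fil n).subtype (Fil (n - 1)))).mp hz
    rw [mem_comap, LinearMap.mem_ker, Submodule.subtype_apply] at hzT
    refine ⟨x - z, by simpa using neg_mem hzx, ?_⟩
    rw [map_sub, hzT, sub_zero]
    simp
  · rintro ⟨y, hy, hTy⟩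
    refine ⟨⟨⟨x - y, sub_mem x.2 (hmono (sub_one_lt n).le hy)⟩, ?_⟩, ?_⟩
    · rw [mem_comap, LinearMap.mem_ker]
      simp [map_sub, hTy]
    · refine (Submodule.Quotient.eq _).mpr ?_
      simpa using neg_mem hy

lemma bijective_CQ_pred_of_isUnit (hGT : ActsByDegreeOnGr Fil θ) {n m : ℤ}
    (hu : IsUnit ((n - m : ℤ) : R)) {hle : Fil (m - 1) ≤ Fil m}
    {ψ : CQ Fil θ n (m - 1) →ₗ[R] CQ Fil θ n m}
    (hψ : ∀ x, ψ (Submodule.Quotient.mk x) = Submodule.Quotient.mk (inclusion hle x)) :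
    Function.Bijective ψ :=
  ⟨injective_of_inf_le hψ (fil_pred_inf_map_le_map_of_isUnit hGT hu),
    surjective_of_le_sup hψ (fil_le_sup_map_of_isUnit hGT hu)⟩

lemma surjective_and_range_eq_ker_of_isUnit (hmono : Monotone Fil)
    (hGT : ActsByDegreeOnGr Fil θ) {n m : ℤ} {q : ℕ} (hq : 0 < q)
    (hu : ∀ k, m - q < k → k < m → IsUnit ((n - k : ℤ) : R))
    {c : R} (hc : c = ((n - m : ℤ) : R))
    {hle : Fil (m - q) ≤ Fil m} {α : CQ Fil θ n (m - q) →ₗ[R] CQ Fil θ n m}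
    (hα : ∀ x, α (Submodule.Quotient.mk x) = Submodule.Quotient.mk (inclusion hle x))
    {β : CQ Fil θ n m →ₗ[R]
      grQ Fil m ⧸ LinearMap.range (c • LinearMap.id : grQ Fil m →ₗ[R] grQ Fil m)}
    (hβ : ∀ x : Fil m, β (Submodule.Quotient.mk x) =
      Submodule.Quotient.mk (Submodule.Quotient.mk x : grQ Fil m)) :
    Function.Surjective β ∧ LinearMap.range α = LinearMap.ker β := by
  refine ⟨fun y ↦ ?_, le_antisymm ?_ ?_⟩
  · obtain ⟨y, rfl⟩ := Submodule.Quotient.mk_surjective _ y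
    obtain ⟨x, rfl⟩ := Submodule.Quotient.mk_surjective _ y
    exact ⟨_, hβ x⟩
  · rintro _ ⟨a, rfl⟩
    obtain ⟨a, rfl⟩ := Submodule.Quotient.mk_surjective _ a
    have ha : (Submodule.Quotient.mk (inclusion hle a) : grQ Fil m) = 0 :=
      (Submodule.Quotient.mk_eq_zero _).mpr (hmono (by omega : m - q ≤ m - 1) a.2)
    rw [LinearMap.mem_ker, hα, hβ, ha, Submodule.Quotient.mk_zero]
  · intro y hy
    obtain ⟨x, rfl⟩ := Submodule.Quotient.mk_surjective _ y
    rw [LinearMap.mem_ker, hβ, Submodule.Quotient.mk_eq_zero] at hy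
    obtain ⟨z, hz⟩ := hy
    obtain ⟨z, rfl⟩ := Submodule.Quotient.mk_surjective _ z
    have hxz : (x : M) - c • z ∈ Fil (m - 1) := by
      simpa using neg_mem ((Submodule.Quotient.eq (comap (Fil m).subtype (Fil (m - 1)))).mp hz)
    have hpred : Fil (m - 1) ≤ Fil (m - q) ⊔ (Fil m).map (θ - (n : R) • LinearMap.id) :=
      (fil_le_sup_map_of_forall_isUnit hGT hmono (by omega)
        fun k hk _ ↦ hu k hk (by omega)).trans (sup_le_sup_left (map_mono (hmono (by omega))) _)
    have hcz : c • (z : M) ∈ Fil (m - q) ⊔ (Fil m).map (θ - (n : R) • LinearMap.id) := by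
      rw [hc]
      exact sup_le hpred le_sup_right (intCast_sub_smul_mem_sup_map hGT n z.2)
    apply mk_mem_range_of_mem_sup hα
    simpa using add_mem (hpred hxz) hcz

end Filtration

end FilSen

theorem torsion_control_sequences
    {R : Type*} [CommRing R] [IsDomain R] [IsDiscreteValuationRing R] [CharZero R]
    (p : ℕ) [Fact p.Prime] (hp : Irreducible (p : R))
    {M : Type*} [AddCommGroup M] [Module R M] [Module.Free R M]
    (Fil : ℤ → Submodule R M) (hmono : Monotone Fil)
    (hbot : ∀ n : ℤ, n < 0 → Fil n = ⊥)
    (θ : M →ₗ[R] M)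
    (hGT : ∀ n : ℤ, ∀ x ∈ Fil n, θ x - (n : R) • x ∈ Fil (n - 1))
    (n : ℤ) :
    -- (1) the sequence `0 → (Fil_n)^{θ = n} → gr_n M → C_{n-1}` is left exact, where
    -- the first map is induced by the projection `Fil_n → gr_n` and the second map `g`
    -- sends the class of `x ∈ Fil_n` to the class of `(θ - n) x ∈ Fil_{n-1}`.
    (∀ g : grQ Fil n →ₗ[R] CQ Fil θ n (n - 1),
      (∀ x : ↥(Fil n),
        g (Submodule.Quotient.mk x)
          = Submodule.Quotient.mk
              (⟨θ (x : M) - (n : R) • (x : M), hGT n (x : M) x.2⟩ : ↥(Fil (n - 1)))) →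
      Function.Injective
        ((Submodule.mkQ (Submodule.comap (Fil n).subtype (Fil (n - 1)))).comp
          (Submodule.subtype (Submodule.comap (Fil n).subtype
            (LinearMap.ker (θ - (n : R) • (LinearMap.id : M →ₗ[R] M)))))) ∧
      LinearMap.range
        ((Submodule.mkQ (Submodule.comap (Fil n).subtype (Fil (n - 1)))).comp
          (Submodule.subtype (Submodule.comap (Fil n).subtype
            (LinearMap.ker (θ - (n : R) • (LinearMap.id : M →ₗ[R] M))))))
        = LinearMap.ker g) ∧
    -- (2) for every `m` with `p ∤ (n - m)`, the inclusion `Fil_{m-1} ⊆ Fil_m`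
    -- induces an isomorphism `C_{m-1} ≅ C_m`
    (∀ m : ℤ, ¬ ((p : ℤ) ∣ (n - m)) →
      ∀ ψ : CQ Fil θ n (m - 1) →ₗ[R] CQ Fil θ n m,
        (∀ x : ↥(Fil (m - 1)),
          ψ (Submodule.Quotient.mk x)
            = Submodule.Quotient.mk (Submodule.inclusion (hmono (by omega : m - 1 ≤ m)) x)) →
        Function.Bijective ψ) ∧
    -- (3) for every `b ≥ 0` there is a right exact sequence
    -- `C_{n-bp-p} → C_{n-bp} → gr_{n-bp} M / (bp)·gr_{n-bp} M → 0`, the maps being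
    -- induced by the inclusion of filtration steps and the projection to the graded
    -- piece
    (∀ b : ℕ,
      ∀ α : CQ Fil θ n (n - ((b * p : ℕ) : ℤ) - (p : ℤ)) →ₗ[R] CQ Fil θ n (n - ((b * p : ℕ) : ℤ)),
        (∀ x : ↥(Fil (n - ((b * p : ℕ) : ℤ) - (p : ℤ))),
          α (Submodule.Quotient.mk x)
            = Submodule.Quotient.mk
                (Submodule.inclusion
                  (hmono (by omega : n - ((b * p : ℕ) : ℤ) - (p : ℤ) ≤ n - ((b * p : ℕ) : ℤ))) x)) →
      ∀ β : CQ Fil θ n (n - ((b * p : ℕ) : ℤ)) →ₗ[R]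
          (grQ Fil (n - ((b * p : ℕ) : ℤ)) ⧸
            LinearMap.range ((((b * p : ℕ) : R)) •
              (LinearMap.id : grQ Fil (n - ((b * p : ℕ) : ℤ)) →ₗ[R] grQ Fil (n - ((b * p : ℕ) : ℤ))))),
        (∀ x : ↥(Fil (n - ((b * p : ℕ) : ℤ))),
          β (Submodule.Quotient.mk x)
            = Submodule.Quotient.mk
                ((Submodule.Quotient.mk x : grQ Fil (n - ((b * p : ℕ) : ℤ))))) →
        Function.Surjective β ∧ LinearMap.range α = LinearMap.ker β) := by
  have hunit (k : ℤ) (hk : ¬(p : ℤ) ∣ (n - k)) : IsUnit ((n - k : ℤ) : R) :=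
    isUnit_intCast_of_not_dvd Fact.out hp.not_isUnit hk
  refine ⟨fun g hg ↦ ⟨injective_ker_to_grQ hGT hbot n, range_ker_to_grQ_eq_ker hmono hGT hg⟩,
    fun m hm ψ hψ ↦ bijective_CQ_pred_of_isUnit hGT (hunit m hm) hψ,
    fun b α hα β hβ ↦ surjective_and_range_eq_ker_of_isUnit hmono hGT (Fact.out : p.Prime).pos
      (fun k hk hk' ↦ hunit k fun hdvd ↦ ?_) (by push_cast; ring) hα hβ⟩
  -- `n - k - bp` would be a multiple of `p` strictly between `0` and `p`.
  set N : ℤ := ((b * p : ℕ) : ℤ)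
  have hN : (p : ℤ) ∣ N := ⟨b, by push_cast [N]; ring⟩
  have := Int.le_of_dvd (by omega) (dvd_sub hdvd hN)
  omega
end
end

section
/- Theorem (Bound of exponent, paper Theorem 6.4, in the form established by its proof). In the situation of the context: (1) for every n ≥ 0, the torsion submodule of gr_n M is killed by n! (equivalently, by p^{v_p(n!)}); (2) gr_n M = 0 for every n ≥ r_d + 1; consequently the torsion submodule of every graded piece gr_n M is killed by r_d!. -/
/-!
For `x ∈ Fil_n`, Griffiths transversality says that `θ` acts on `gr_n` as multiplication by `n`,
so `H_n(θ) = θ (θ - 1) ⋯ (θ - (n - 1))` sends `x` to `n! • x` modulo `Fil_{n-1}`. On the other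
hand `H_n(θ)` kills `Fil_{n-1}`, its factors `θ - (n - 1), …, θ - 0` lowering the filtration
step by step down to `Fil_{-1} = 0`. If `a • x ∈ Fil_{n-1}` for a regular `a`, then
`a • H_n(θ) x = H_n(θ) (a • x) = 0`, hence `H_n(θ) x = 0` since `M` is torsion-free, and so
`n! • x ∈ Fil_{n-1}`.
-/

open Submodule

noncomputable section

open FilSen

open Polynomial

namespace FilSen

variable {R : Type*} [CommRing R] {M : Type*} [AddCommGroup M] [Module R M]
  {Fil : ℤ → Submodule R M}

lemma grQ_mk_eq_zero_iff {n : ℤ} (x : Fil n) :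
    (Submodule.Quotient.mk x : grQ Fil n) = 0 ↔ (x : M) ∈ Fil (n - 1) := by
  rw [Submodule.Quotient.mk_eq_zero, Submodule.mem_comap, Submodule.subtype_apply]

lemma subsingleton_grQ {n : ℤ} (h : Fil n ≤ Fil (n - 1)) : Subsingleton (grQ Fil n) :=
  Submodule.Quotient.subsingleton_iff.mpr (Submodule.comap_subtype_eq_top.mpr h)

variable {θ : Module.End R M}

lemma aeval_apply_sub_eval_smul_mem (hstab : ∀ n : ℤ, ∀ x ∈ Fil n, θ x ∈ Fil n)
    (hGT : ∀ n : ℤ, ∀ x ∈ Fil n, θ x - (n : R) • x ∈ Fil (n - 1))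
    (P : R[X]) {n : ℤ} {x : M} (hx : x ∈ Fil n) :
    aeval θ P x - P.eval (n : R) • x ∈ Fil (n - 1) := by
  induction P using Polynomial.induction_on with
  | C a => simp
  | add P Q hP hQ =>
    simpa only [map_add, LinearMap.add_apply, eval_add, add_smul, add_sub_add_comm]
      using add_mem hP hQ
  | monomial k a ih =>
    set c := (C a * X ^ k).eval (n : R)
    have hsplit : θ (aeval θ (C a * X ^ k) x) - ((n : R) * c) • x =
        θ (aeval θ (C a * X ^ k) x - c • x) + c • (θ x - (n : R) • x) := by
      rw [map_sub, map_smul, smul_sub, smul_smul, mul_comm c]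
      abel
    rw [pow_succ', mul_left_comm, map_mul, aeval_X, Module.End.mul_apply, eval_mul, eval_X, hsplit]
    exact add_mem (hstab _ _ ih) (Submodule.smul_mem _ _ (hGT n x hx))

lemma aeval_descPochhammer_apply_eq_zero
    (hGT : ∀ n : ℤ, ∀ x ∈ Fil n, θ x - (n : R) • x ∈ Fil (n - 1)) (hbot : Fil (-1) = ⊥)
    (k : ℕ) {x : M} (hx : x ∈ Fil ((k : ℤ) - 1)) :
    aeval θ (descPochhammer R k) x = 0 := by
  induction k generalizing x with
  | zero => simpa [hbot] using hx
  | succ k ih =>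
    rw [Nat.cast_succ, add_sub_cancel_right] at hx
    rw [descPochhammer_succ_right, map_mul, Module.End.mul_apply]
    refine ih ?_
    simpa only [map_sub, aeval_X, map_natCast, LinearMap.sub_apply, Module.End.natCast_apply,
      Int.cast_natCast, Nat.cast_smul_eq_nsmul] using hGT k x hx

theorem factorial_smul_mem_of_smul_mem [Module.IsTorsionFree R M]
    (hstab : ∀ n : ℤ, ∀ x ∈ Fil n, θ x ∈ Fil n)
    (hGT : ∀ n : ℤ, ∀ x ∈ Fil n, θ x - (n : R) • x ∈ Fil (n - 1)) (hbot : Fil (-1) = ⊥)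
    (n : ℕ) {x : M} (hx : x ∈ Fil n) {a : R} (ha : IsRegular a)
    (hax : a • x ∈ Fil ((n : ℤ) - 1)) :
    (n.factorial : R) • x ∈ Fil ((n : ℤ) - 1) := by
  have hkill : aeval θ (descPochhammer R n) x = 0 := by
    refine ha.isSMulRegular (show a • _ = a • 0 from ?_)
    rw [smul_zero, ← map_smul]
    exact aeval_descPochhammer_apply_eq_zero hGT hbot n hax
  have hcong := aeval_apply_sub_eval_smul_mem hstab hGT (descPochhammer R n) hx
  rwa [hkill, Int.cast_natCast, descPochhammer_eval_eq_descFactorial, Nat.descFactorial_self,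
    zero_sub, neg_mem_iff] at hcong

theorem factorial_smul_eq_zero_of_mem_torsion_grQ [Module.IsTorsionFree R M]
    (hstab : ∀ n : ℤ, ∀ x ∈ Fil n, θ x ∈ Fil n)
    (hGT : ∀ n : ℤ, ∀ x ∈ Fil n, θ x - (n : R) • x ∈ Fil (n - 1)) (hbot : Fil (-1) = ⊥)
    (n : ℕ) {x : grQ Fil n} (hx : x ∈ Submodule.torsion R (grQ Fil n)) :
    (n.factorial : R) • x = 0 := by
  obtain ⟨x, rfl⟩ := Submodule.Quotient.mk_surjective _ x
  obtain ⟨⟨a, ha⟩, hax⟩ := (Submodule.mem_torsion_iff _).mp hx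
  rw [Submonoid.mk_smul, ← Submodule.Quotient.mk_smul, grQ_mk_eq_zero_iff] at hax
  rw [← Submodule.Quotient.mk_smul, grQ_mk_eq_zero_iff]
  exact factorial_smul_mem_of_smul_mem hstab hGT hbot n x.2
    (isRegular_iff_eq_zero_of_mul.mpr ha) hax

end FilSen

theorem bound_of_exponent_general
    {R : Type*} [CommRing R]
    {M : Type*} [AddCommGroup M] [Module R M] [Module.Free R M]
    (d : ℕ)
    (r : Fin d → ℕ)
    (Fil : ℤ → Submodule R M)
    (hbot : ∀ n : ℤ, n < 0 → Fil n = ⊥)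
    (htop : ∀ n : ℤ, ((Finset.univ.sup r : ℕ) : ℤ) ≤ n → Fil n = ⊤)
    (θ : M →ₗ[R] M)
    (hstab : ∀ n : ℤ, ∀ x ∈ Fil n, θ x ∈ Fil n)
    (hGT : ∀ n : ℤ, ∀ x ∈ Fil n, θ x - (n : R) • x ∈ Fil (n - 1)) :
    -- (1) the torsion submodule of `gr_n M` is killed by `n!`
    (∀ n : ℕ, ∀ x ∈ Submodule.torsion R (grQ Fil (n : ℤ)),
      ((Nat.factorial n : R)) • x = 0) ∧
    -- (2) `gr_n M = 0` for every `n ≥ r_d + 1` ...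
    (∀ n : ℤ, ((Finset.univ.sup r : ℕ) : ℤ) + 1 ≤ n → ∀ x : grQ Fil n, x = 0) ∧
    -- ... consequently the torsion of every graded piece is killed by `r_d!`
    (∀ n : ℤ, ∀ x ∈ Submodule.torsion R (grQ Fil n),
      ((Nat.factorial (Finset.univ.sup r) : R)) • x = 0) := by
  have hkilled := fun n x hx ↦
    factorial_smul_eq_zero_of_mem_torsion_grQ hstab hGT (hbot (-1) (by norm_num)) n (x := x) hx
  have hvanish : ∀ n : ℤ, ((Finset.univ.sup r : ℕ) : ℤ) + 1 ≤ n → ∀ x : grQ Fil n, x = 0 :=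
    fun n hn x ↦ (subsingleton_grQ (by rw [htop (n - 1) (by omega)]; exact le_top)).elim x 0
  refine ⟨hkilled, hvanish, fun n x hx ↦ ?_⟩
  obtain hneg | hnonneg := lt_or_ge n 0
  · rw [(subsingleton_grQ (by rw [hbot n hneg]; exact bot_le)).elim x 0, smul_zero]
  obtain hbig | hsmall := le_or_gt ((Finset.univ.sup r : ℕ) + 1 : ℤ) n
  · rw [hvanish n hbig x, smul_zero]
  lift n to ℕ using hnonneg
  obtain ⟨c, hc⟩ := Nat.factorial_dvd_factorial (show n ≤ Finset.univ.sup r by omega)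
  rw [hc, Nat.cast_mul, mul_comm, mul_smul, hkilled n x hx, smul_zero]

theorem bound_of_exponent
    {R : Type*} [CommRing R] [IsDomain R] [IsDiscreteValuationRing R] [CharZero R]
    (p : ℕ) [Fact p.Prime] (hp : Irreducible (p : R))
    {M : Type*} [AddCommGroup M] [Module R M] [Module.Free R M] [Module.Finite R M]
    (d : ℕ) (hd : 0 < d) (hrank : Module.finrank R M = d)
    (r : Fin d → ℕ) (hr : Monotone r)
    (Fil : ℤ → Submodule R M) (hmono : Monotone Fil)
    (hbot : ∀ n : ℤ, n < 0 → Fil n = ⊥)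
    (htop : ∀ n : ℤ, ((Finset.univ.sup r : ℕ) : ℤ) ≤ n → Fil n = ⊤)
    (θ : M →ₗ[R] M)
    (hstab : ∀ n : ℤ, ∀ x ∈ Fil n, θ x ∈ Fil n)
    (hGT : ∀ n : ℤ, ∀ x ∈ Fil n, θ x - (n : R) • x ∈ Fil (n - 1))
    (hchar : LinearMap.charpoly θ = ∏ i : Fin d, (Polynomial.X - Polynomial.C ((r i : R))))
    (hdiag : Polynomial.aeval θ (∏ v ∈ Finset.image r Finset.univ,
        (Polynomial.X - Polynomial.C ((v : R)))) = 0) :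
    -- (1) the torsion submodule of `gr_n M` is killed by `n!`
    (∀ n : ℕ, ∀ x ∈ Submodule.torsion R (grQ Fil (n : ℤ)),
      ((Nat.factorial n : R)) • x = 0) ∧
    -- (2) `gr_n M = 0` for every `n ≥ r_d + 1` ...
    (∀ n : ℤ, ((Finset.univ.sup r : ℕ) : ℤ) + 1 ≤ n → ∀ x : grQ Fil n, x = 0) ∧
    -- ... consequently the torsion of every graded piece is killed by `r_d!`
    (∀ n : ℤ, ∀ x ∈ Submodule.torsion R (grQ Fil n),
      ((Nat.factorial (Finset.univ.sup r) : R)) • x = 0) :=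
  bound_of_exponent_general d r Fil hbot htop θ hstab hGT
end
end

section
/- Lemma (paper Lemma 6.9, mod p conjugate filtration via elementary divisors). In the situation of the context, fix a 𝔖̄-basis (e_1, …, e_d) of M̄ and let A ∈ M_d(k[[u]]) be the matrix with φ_{M̄}(e_j) = ∑_i A_{ij} e_i. Since k[[u]] is a discrete valuation ring, A admits a decomposition A = X · diag(u^{a_1}, …, u^{a_d}) · Y with X, Y ∈ GL_d(k[[u]]) and integers 0 ≤ a_1 ≤ … ≤ a_d (the a_i depend only on M̄, being its elementary divisor exponents). Then for every n ≥ 0: dim_k (Fil_n M̄_HT / Fil_{n−1} M̄_HT) = #{i : a_i = n}. -/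
/-!
Statement 10 (paper Lemma 6.9): mod `p` conjugate filtration via elementary divisors.

Context: `k` a perfect field of characteristic `p`, `𝔖̄ = k[[u]]` with the
endomorphism `φ` determined by `φ(∑ aᵢ uⁱ) = ∑ aᵢᵖ u^{ip}` (characterized below on
coefficients), and a mod `p` Breuil--Kisin module `(M̄, φ_{M̄})`: `M̄` finite free of
rank `d` (with basis `bM`), `φ_{M̄}` a `φ`-semilinear map whose linearization is
injective (⟺ `LinearIndependent` of `φ_{M̄} ∘ bM`) with cokernel killed by `u^h`.
The auxiliary `Module k M̄`/`IsScalarTower` instances encode the (canonical)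
`k`-structure used to measure `k`-dimensions.
-/

open Submodule

noncomputable section

namespace ModPBK

variable {p : ℕ} [Fact p.Prime] {k : Type*} [Field k] [CharP k p]
variable {Mb : Type*} [AddCommGroup Mb] [Module (PowerSeries k) Mb]
variable [Module k Mb] [IsScalarTower k (PowerSeries k) Mb]

/-- `u^i M̄` as a submodule of `M̄`. -/
def uPowSub (i : ℕ) : Submodule (PowerSeries k) Mb :=
  LinearMap.range ((PowerSeries.X ^ i : PowerSeries k) •
    (LinearMap.id : Mb →ₗ[PowerSeries k] Mb))

variable {φ : PowerSeries k →+* PowerSeries k}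

/-- `M̄*`, the `𝔖̄`-submodule generated by the image of `φ_{M̄}`. -/
def star (φM : Mb →ₛₗ[φ] Mb) : Submodule (PowerSeries k) Mb :=
  Submodule.span (PowerSeries k) (Set.range φM)

/-- The conjugate filtration on `M̄_HT = M̄/uM̄`: the image of `{y | uⁿ y ∈ M̄*}`. -/
def filHT (φM : Mb →ₛₗ[φ] Mb) (n : ℕ) :
    Submodule (PowerSeries k) (Mb ⧸ (uPowSub 1 : Submodule (PowerSeries k) Mb)) :=
  Submodule.map (uPowSub 1 : Submodule (PowerSeries k) Mb).mkQ
    (Submodule.comap ((PowerSeries.X ^ n : PowerSeries k) •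
      (LinearMap.id : Mb →ₗ[PowerSeries k] Mb)) (star φM))

/-- `gr_n M̄_HT = Fil_n M̄_HT / Fil_{n-1} M̄_HT` as a `k`-vector space
(`Fil_{-1} = 0`). -/
abbrev grHTk (φM : Mb →ₛₗ[φ] Mb) (n : ℕ) :=
  ↥(Submodule.restrictScalars k (filHT φM n)) ⧸
    Submodule.comap (Submodule.restrictScalars k (filHT φM n)).subtype
      (Submodule.restrictScalars k (if n = 0 then ⊥ else filHT φM (n - 1)))

end ModPBK

open ModPBK

/-!
Let `f = X · bM`, a new basis of `M̄`. As `Y` is invertible, `M̄*` is the image of `A = X D Y`,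
i.e. the span of the `u^{aᵢ} fᵢ`. So `uⁿ y ∈ M̄*` iff `u^{aᵢ}` divides `uⁿ yᵢ` for each coordinate
`yᵢ` of `y` in `f`; modulo `u` the coordinates with `aᵢ > n` then vanish, and `Fil_n M̄_HT` is
spanned by the reductions of the `fᵢ` with `aᵢ ≤ n`. These reductions are `k`-linearly
independent in `M̄/uM̄`, so `dim_k Fil_n M̄_HT = #{i | aᵢ ≤ n}`, and the graded pieces are counted
by `#{i | aᵢ = n}`.
-/

open Module

section Filtration

variable {k V ι : Type*} [Field k] [AddCommGroup V] [Module k V] [Fintype ι]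

theorem finrank_span_image_setOf {v : ι → V} (hv : LinearIndependent k v) (P : ι → Prop)
    [DecidablePred P] :
    finrank k (span k (v '' {i | P i})) = (Finset.univ.filter P).card := by
  rw [Set.image_eq_range]
  exact (finrank_span_eq_card (hv.comp _ Subtype.val_injective)).trans (Fintype.card_subtype P)

theorem finrank_quotient_comap_subtype_add_finrank {W W' : Submodule k V} [FiniteDimensional k W]
    (h : W' ≤ W) : finrank k (W ⧸ W'.comap W.subtype) + finrank k W' = finrank k W := by
  rw [← (comapSubtypeEquivOfLe h).finrank_eq]
  exact finrank_quotient_add_finrank _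

theorem finrank_quotient_filtration_of_linearIndependent {v : ι → V}
    (hv : LinearIndependent k v) (a : ι → ℕ) (F : ℕ → Submodule k V)
    (hF : ∀ n, F n = span k (v '' {i | a i ≤ n})) (n : ℕ) :
    finrank k (F n ⧸ (if n = 0 then ⊥ else F (n - 1)).comap (F n).subtype)
      = (Finset.univ.filter fun i => a i = n).card := by
  rcases n with _ | n
  · rw [if_pos rfl, comap_bot, ker_subtype, (quotEquivOfEqBot _ rfl).finrank_eq, hF,
      finrank_span_image_setOf hv]
    simp only [nonpos_iff_eq_zero]
  · classical
    have hle : F n ≤ F (n + 1) := by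
      rw [hF, hF]
      exact span_mono (Set.image_mono fun i (hi : a i ≤ n) => Nat.le_succ_of_le hi)
    have : FiniteDimensional k (F (n + 1)) := by
      rw [hF]; exact FiniteDimensional.span_of_finite k ((Set.toFinite _).image _)
    have hsplit : Finset.univ.filter (fun i => a i ≤ n + 1)
        = Finset.univ.filter (fun i => a i ≤ n) ∪ Finset.univ.filter (fun i => a i = n + 1) := by
      ext i; simp only [Finset.mem_filter, Finset.mem_union, Finset.mem_univ, true_and]; omega
    have hdisj : Disjoint (Finset.univ.filter fun i => a i ≤ n)
        (Finset.univ.filter fun i => a i = n + 1) :=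
      Finset.disjoint_filter.2 fun i _ h₁ h₂ => by omega
    have hdim := finrank_quotient_comap_subtype_add_finrank hle
    rw [hF, hF, finrank_span_image_setOf hv, finrank_span_image_setOf hv, hsplit,
      Finset.card_union_of_disjoint hdisj, ← hF, ← hF] at hdim
    rw [if_neg n.succ_ne_zero, Nat.add_sub_cancel]
    omega

end Filtration

section ModU

variable {k M : Type*} [Field k] [AddCommGroup M] [Module (PowerSeries k) M]

theorem mkQ_smul_eq_zero_of_X_dvd {c : PowerSeries k} (hc : PowerSeries.X ∣ c) (m : M) :
    (uPowSub 1 : Submodule (PowerSeries k) M).mkQ (c • m) = 0 := by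
  obtain ⟨c', rfl⟩ := hc
  rw [mkQ_apply, Quotient.mk_eq_zero]
  exact ⟨c' • m, by simp [smul_smul, mul_comm]⟩

variable [Module k M] [IsScalarTower k (PowerSeries k) M]

theorem smul_mkQ_eq_constantCoeff_smul (c : PowerSeries k) (m : M) :
    c • (uPowSub 1 : Submodule (PowerSeries k) M).mkQ m
      = PowerSeries.constantCoeff c • (uPowSub 1).mkQ m := by
  have hX : PowerSeries.X ∣ c - PowerSeries.C (PowerSeries.constantCoeff c) :=
    ⟨_, PowerSeries.sub_const_eq_X_mul_shift c⟩
  rw [← sub_eq_zero, ← algebraMap_smul (PowerSeries k) (PowerSeries.constantCoeff c),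
    PowerSeries.algebraMap_apply, Algebra.algebraMap_self, RingHom.id_apply, ← sub_smul, ← map_smul]
  exact mkQ_smul_eq_zero_of_X_dvd hX m

theorem restrictScalars_span_quotient_uPowSub_one
    (s : Set (M ⧸ (uPowSub 1 : Submodule (PowerSeries k) M))) :
    (span (PowerSeries k) s).restrictScalars k = span k s := by
  refine le_antisymm ?_ (span_le_restrictScalars k (PowerSeries k) s)
  intro x hx
  induction hx using span_induction with
  | mem x hx => exact subset_span hx
  | zero => exact zero_mem _
  | add x y _ _ hx hy => exact add_mem hx hy
  | smul c x _ hx =>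
    obtain ⟨m, rfl⟩ := (uPowSub 1 : Submodule (PowerSeries k) M).mkQ_surjective x
    rw [smul_mkQ_eq_constantCoeff_smul]
    exact smul_mem _ _ hx

theorem linearIndependent_mkQ_basis {ι : Type*} [Fintype ι] (b : Basis ι (PowerSeries k) M) :
    LinearIndependent k ((uPowSub 1 : Submodule (PowerSeries k) M).mkQ ∘ b) := by
  refine Fintype.linearIndependent_iff.2 fun g hg i => ?_
  have hsum : (uPowSub 1 : Submodule (PowerSeries k) M).mkQ
      (∑ j, PowerSeries.C (g j) • b j) = 0 := by
    simp only [map_sum, map_smul, smul_mkQ_eq_constantCoeff_smul, PowerSeries.constantCoeff_C]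
    exact hg
  rw [mkQ_apply, Quotient.mk_eq_zero] at hsum
  obtain ⟨m, hm⟩ := hsum
  have hcoeff := congrArg (fun x => PowerSeries.constantCoeff (b.repr x i)) hm
  simp only [b.repr_sum_self] at hcoeff
  simpa using hcoeff.symm

end ModU

section Span

variable {R M ι : Type*} [CommRing R] [AddCommGroup M] [Module R M] [Fintype ι]

theorem mem_span_range_smul_basis_iff (b : Basis ι R M) (c : ι → R) (m : M) :
    m ∈ span R (Set.range fun i => c i • b i) ↔ ∀ i, c i ∣ b.repr m i := by
  simp_rw [mem_span_range_iff_exists_fun, smul_smul]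
  constructor
  · rintro ⟨e, rfl⟩ i
    rw [b.repr_sum_self]
    exact dvd_mul_left _ _
  · intro h
    choose e he using h
    refine ⟨e, ?_⟩
    conv_rhs => rw [← b.sum_repr m]
    simp only [he, mul_comm]

theorem span_range_semilinearMap_eq_span_range_comp_basis {S N : Type*} [Semiring S]
    [AddCommMonoid N] [Module S N] {σ : R →+* S} (f : M →ₛₗ[σ] N) (b : Basis ι R M) :
    span S (Set.range f) = span S (Set.range (f ∘ b)) := by
  refine le_antisymm (span_le.2 ?_) (span_mono (Set.range_comp_subset_range _ _))
  rintro _ ⟨m, rfl⟩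
  rw [← b.sum_repr m, map_sum]
  exact sum_mem fun i _ => by
    rw [map_smulₛₗ]
    exact smul_mem _ _ (subset_span ⟨i, rfl⟩)

theorem range_toLin_eq_span_range (b : Basis ι R M) [DecidableEq ι] (A : Matrix ι ι R) :
    LinearMap.range (Matrix.toLin b b A) = span R (Set.range fun j => ∑ i, A i j • b i) := by
  rw [LinearMap.range_eq_map, ← b.span_eq, map_span, ← Set.range_comp]
  simp only [Function.comp_def, Matrix.toLin_self]

theorem range_toLin_mul_diagonal_mul (b : Basis ι R M) [DecidableEq ι] {X Y : Matrix ι ι R}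
    (hX : IsUnit X.det) (hY : IsUnit Y.det) (c : ι → R) :
    LinearMap.range (Matrix.toLin b b (X * Matrix.diagonal c * Y))
      = span R (Set.range fun i => c i • b.map (Matrix.toLinearEquiv b X hX) i) := by
  rw [Matrix.toLin_mul b b b,
    LinearMap.range_comp_of_range_eq_top _ (Matrix.range_toLin_eq_top b Y hY), Matrix.toLin_mul b b b,
    LinearMap.range_comp, range_toLin_eq_span_range, map_span, ← Set.range_comp]
  simp [Function.comp_def, Matrix.diagonal_apply, ite_smul]

end Span

theorem dvd_of_pow_dvd_pow_mul {R : Type*} [CommMonoidWithZero R] [IsCancelMulZero R]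
    {x r : R} (hx : x ≠ 0) {n a : ℕ} (hna : n < a) (h : x ^ a ∣ x ^ n * r) : x ∣ r := by
  rw [← mul_dvd_mul_iff_left (pow_ne_zero n hx), ← pow_succ]
  exact (pow_dvd_pow x hna).trans h

section ConjugateFiltration

variable {k M ι : Type*} [Field k] [AddCommGroup M] [Module (PowerSeries k) M] [Fintype ι]

theorem star_eq_range_toLin [DecidableEq ι] {φ : PowerSeries k →+* PowerSeries k}
    (φM : M →ₛₗ[φ] M) (b : Basis ι (PowerSeries k) M) (A : Matrix ι ι (PowerSeries k))
    (hA : ∀ j, φM (b j) = ∑ i, A i j • b i) :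
    star φM = LinearMap.range (Matrix.toLin b b A) := by
  rw [ModPBK.star, span_range_semilinearMap_eq_span_range_comp_basis φM b,
    range_toLin_eq_span_range]
  simp only [Function.comp_def, hA]

theorem map_mkQ_comap_X_pow_smul_span_eq (f : Basis ι (PowerSeries k) M) (a : ι → ℕ) (n : ℕ) :
    map (uPowSub 1 : Submodule (PowerSeries k) M).mkQ
        (comap ((PowerSeries.X ^ n : PowerSeries k) • LinearMap.id)
          (span (PowerSeries k) (Set.range fun i => (PowerSeries.X : PowerSeries k) ^ a i • f i)))
      = span (PowerSeries k)
          ((uPowSub 1 : Submodule (PowerSeries k) M).mkQ ∘ f '' {i | a i ≤ n}) := by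
  refine le_antisymm ?_ (span_le.2 ?_)
  · rintro _ ⟨m, hm, rfl⟩
    rw [SetLike.mem_coe, mem_comap, LinearMap.smul_apply, LinearMap.id_apply,
      mem_span_range_smul_basis_iff] at hm
    rw [← f.sum_repr m, map_sum]
    refine sum_mem fun i _ => ?_
    by_cases hi : a i ≤ n
    · rw [map_smul]
      exact smul_mem _ _ (subset_span ⟨i, hi, rfl⟩)
    · have hdvd : PowerSeries.X ∣ f.repr m i := by
        refine dvd_of_pow_dvd_pow_mul PowerSeries.X_ne_zero (not_le.1 hi) ?_
        simpa using hm i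
      rw [mkQ_smul_eq_zero_of_X_dvd hdvd]
      exact zero_mem _
  · rintro _ ⟨i, hi, rfl⟩
    refine ⟨f i, ?_, rfl⟩
    rw [SetLike.mem_coe, mem_comap, LinearMap.smul_apply, LinearMap.id_apply,
      ← Nat.sub_add_cancel (show a i ≤ n from hi), pow_add, mul_smul]
    exact smul_mem _ _ (subset_span ⟨i, rfl⟩)

end ConjugateFiltration

theorem modp_conjugate_filtration_elementary_divisors_general
    {k : Type*} [Field k]
    -- the Frobenius `φ` of `k[[u]]`, `∑ aᵢ uⁱ ↦ ∑ aᵢᵖ u^{ip}`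
    (φ : PowerSeries k →+* PowerSeries k)
    -- the mod `p` Breuil--Kisin module
    {Mb : Type*} [AddCommGroup Mb] [Module (PowerSeries k) Mb]
    [Module k Mb] [IsScalarTower k (PowerSeries k) Mb]
    (d : ℕ) (bM : Module.Basis (Fin d) (PowerSeries k) Mb)
    (φM : Mb →ₛₗ[φ] Mb)
    -- the matrix `A` of `φ_{M̄}` in the basis `bM` and a decomposition
    -- `A = X · diag(u^{a_1}, …, u^{a_d}) · Y` with `X, Y ∈ GL_d(k[[u]])`,
    -- `0 ≤ a_1 ≤ … ≤ a_d`
    (A : Matrix (Fin d) (Fin d) (PowerSeries k))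
    (hA : ∀ j, φM (bM j) = ∑ i, A i j • bM i)
    (X Y : Matrix (Fin d) (Fin d) (PowerSeries k))
    (hX : IsUnit X) (hY : IsUnit Y)
    (a : Fin d → ℕ)
    (hdec : A = X * Matrix.diagonal (fun i => (PowerSeries.X : PowerSeries k) ^ a i) * Y) :
    -- `dim_k (Fil_n M̄_HT / Fil_{n-1} M̄_HT) = #{i : a_i = n}`
    ∀ n : ℕ, Module.finrank k (grHTk φM n)
      = (Finset.univ.filter (fun i : Fin d => a i = n)).card := by
  intro n
  have hXdet := (Matrix.isUnit_iff_isUnit_det X).1 hX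
  set f := bM.map (Matrix.toLinearEquiv bM X hXdet)
  have hstar : star φM = span (PowerSeries k)
      (Set.range fun i => (PowerSeries.X : PowerSeries k) ^ a i • f i) := by
    rw [star_eq_range_toLin φM bM A hA, hdec,
      range_toLin_mul_diagonal_mul bM hXdet ((Matrix.isUnit_iff_isUnit_det Y).1 hY)]
  have hfil : ∀ m, (filHT φM m).restrictScalars k
      = span k ((uPowSub 1 : Submodule (PowerSeries k) Mb).mkQ ∘ f '' {i | a i ≤ m}) := by
    intro m
    rw [filHT, hstar, map_mkQ_comap_X_pow_smul_span_eq, restrictScalars_span_quotient_uPowSub_one]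
  rw [← finrank_quotient_filtration_of_linearIndependent (linearIndependent_mkQ_basis f) a _ hfil n]
  -- the two sides differ only in the order of `restrictScalars k` and the `if` giving `Fil_{n-1}`
  cases n <;> rfl

theorem modp_conjugate_filtration_elementary_divisors
    {p : ℕ} [Fact p.Prime] {k : Type*} [Field k] [CharP k p]
    [ExpChar k p] [PerfectRing k p]
    -- the Frobenius `φ` of `k[[u]]`, `∑ aᵢ uⁱ ↦ ∑ aᵢᵖ u^{ip}`
    (φ : PowerSeries k →+* PowerSeries k)
    (hφ : ∀ (f : PowerSeries k) (n : ℕ),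
      PowerSeries.coeff (p * n) (φ f) = (PowerSeries.coeff n f) ^ p)
    (hφ' : ∀ (f : PowerSeries k) (m : ℕ), ¬ p ∣ m → PowerSeries.coeff m (φ f) = 0)
    -- the mod `p` Breuil--Kisin module
    {Mb : Type*} [AddCommGroup Mb] [Module (PowerSeries k) Mb]
    [Module k Mb] [IsScalarTower k (PowerSeries k) Mb]
    (d : ℕ) (bM : Module.Basis (Fin d) (PowerSeries k) Mb)
    (φM : Mb →ₛₗ[φ] Mb)
    (hinj : LinearIndependent (PowerSeries k) fun i => φM (bM i))
    (h : ℕ)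
    (hcoker : ∀ m : Mb, (PowerSeries.X ^ h : PowerSeries k) • m ∈ star φM)
    -- the matrix `A` of `φ_{M̄}` in the basis `bM` and a decomposition
    -- `A = X · diag(u^{a_1}, …, u^{a_d}) · Y` with `X, Y ∈ GL_d(k[[u]])`,
    -- `0 ≤ a_1 ≤ … ≤ a_d`
    (A : Matrix (Fin d) (Fin d) (PowerSeries k))
    (hA : ∀ j, φM (bM j) = ∑ i, A i j • bM i)
    (X Y : Matrix (Fin d) (Fin d) (PowerSeries k))
    (hX : IsUnit X) (hY : IsUnit Y)
    (a : Fin d → ℕ) (ha : Monotone a)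
    (hdec : A = X * Matrix.diagonal (fun i => (PowerSeries.X : PowerSeries k) ^ a i) * Y) :
    -- `dim_k (Fil_n M̄_HT / Fil_{n-1} M̄_HT) = #{i : a_i = n}`
    ∀ n : ℕ, Module.finrank k (grHTk φM n)
      = (Finset.univ.filter (fun i : Fin d => a i = n)).card :=
  modp_conjugate_filtration_elementary_divisors_general φ d bM φM A hA X Y hX hY a hdec
end
end

section
/- Theorem (paper Theorem 6.11, originally due to Gee–Kisin, stated in the conditional form established by the paper's proof). In the situation of the context, let 0 ≤ a_1 ≤ … ≤ a_d be the elementary divisor exponents of M̄, i.e. the integers appearing in a decomposition of the matrix of φ_{M̄} (in any basis) as X · diag(u^{a_1}, …, u^{a_d}) · Y with X, Y ∈ GL_d(k[[u]]). Suppose there is a k-linear endomorphism θ : M̄_HT → M̄_HT such that θ(Fil_n M̄_HT) ⊆ Fil_n M̄_HT for every n, θ induces multiplication by n̄ (the image of n in k) on Fil_n M̄_HT / Fil_{n−1} M̄_HT for every n, and the characteristic polynomial of θ equals ∏_{i=1}^d (X − r̄_i) for integers 0 ≤ r_1 ≤ … ≤ r_d (such θ exists by the paper's mod p filtered Sen theory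 when M̄ is the mod p reduction of the Breuil–Kisin module of a lattice in a crystalline representation of G_K with K unramified and Hodge–Tate weights r_1, …, r_d). Then for every element s of the prime field 𝔽_p ⊆ k one has #{i : a_i ≡ s (mod p)} = #{i : r_i ≡ s (mod p)}; i.e. the multisets {a_1, …, a_d} and {r_1, …, r_d} coincide modulo p. -/
/-!
Statement 11 (paper Theorem 6.11, originally due to Gee--Kisin), in the conditional
form established by the paper's proof.

Context: mod `p` Breuil--Kisin module `(M̄, φ_{M̄})` over `𝔖̄ = k[[u]]` (k perfect of
char `p`), with elementary divisor exponents `a_1 ≤ … ≤ a_d` coming from a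
decomposition `A = X · diag(u^{a_i}) · Y` of the matrix of `φ_{M̄}`.  Given a
`k`-linear operator `θ` on `M̄_HT = M̄/uM̄` stabilizing the conjugate filtration,
inducing multiplication by `n̄` on its graded pieces, and with characteristic
polynomial `∏ (X - r̄_i)`, the multisets `{a_i}` and `{r_i}` agree modulo `p`.
-/

open Submodule

noncomputable section

open ModPBK

/-!
The Smith form `A = X · diag(u^{a_i}) · Y` of the matrix of `φ_{M̄}` yields an `𝔖̄`-basis `c` of
`M̄` with `M̄* = ⊕ u^{a_i} 𝔖̄ c_i`. Hence `Fil_n M̄_HT` is spanned by the reductions `c̄_i` with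
`a_i ≤ n`, and as `a` is monotone, the condition on the graded pieces makes the matrix of `θ` in
the basis `c̄` upper triangular with diagonal `ā_i`. Thus `∏ (X - ā_i) = charpoly θ = ∏ (X - r̄_i)`,
and comparing roots in `k ⊇ 𝔽_p` counts the residues.
-/

section LinearAlgebra

variable {R M ι : Type*} [CommRing R] [AddCommGroup M] [Module R M] [Fintype ι]

theorem Module.Basis.span_range_eq_range_toLin [DecidableEq ι] (b : Module.Basis ι R M)
    {σ : R →+* R} (f : M →ₛₗ[σ] M) (A : Matrix ι ι R) (hA : ∀ j, f (b j) = ∑ i, A i j • b i) :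
    span R (Set.range f) = LinearMap.range (Matrix.toLin b b A) := by
  have hrange : LinearMap.range (Matrix.toLin b b A) = span R (Set.range (f ∘ b)) := by
    rw [LinearMap.range_eq_map, ← b.span_eq, map_span, ← Set.range_comp]
    congr 2
    funext j
    simp only [Function.comp_apply, Matrix.toLin_self, hA]
  rw [hrange]
  refine le_antisymm (span_le.2 ?_) (span_mono (Set.range_comp_subset_range b f))
  rintro _ ⟨m, rfl⟩
  rw [← b.sum_repr m, map_sum]
  exact sum_mem fun j _ => by
    rw [LinearMap.map_smulₛₗ]
    exact smul_mem _ _ (subset_span ⟨j, rfl⟩)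

theorem Module.Basis.mem_range_toLin_diagonal_iff [DecidableEq ι] (b : Module.Basis ι R M)
    (d : ι → R) (m : M) :
    m ∈ LinearMap.range (Matrix.toLin b b (Matrix.diagonal d)) ↔ ∀ i, d i ∣ b.repr m i := by
  have hrepr : ∀ x i, b.repr (Matrix.toLin b b (Matrix.diagonal d) x) i = d i * b.repr x i := by
    intro x i
    rw [Matrix.toLin_apply, b.repr_sum_self, Matrix.mulVec_diagonal]
  constructor
  · rintro ⟨x, rfl⟩ i
    exact ⟨_, hrepr x i⟩
  · intro hdvd
    choose t ht using hdvd
    refine ⟨b.equivFun.symm t, b.repr.injective (Finsupp.ext fun i => ?_)⟩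
    rw [hrepr, ht, Module.Basis.equivFun_symm_apply, b.repr_sum_self]

theorem Module.Basis.mem_range_smul_id_iff (b : Module.Basis ι R M) (r : R) (m : M) :
    m ∈ LinearMap.range (r • LinearMap.id : M →ₗ[R] M) ↔ ∀ i, r ∣ b.repr m i := by
  classical
  rw [← b.mem_range_toLin_diagonal_iff, ← Matrix.smul_one_eq_diagonal, map_smul,
    Matrix.toLin_one]

theorem exists_basis_mem_range_toLin_iff_dvd [DecidableEq ι] (b : Module.Basis ι R M)
    {X Y : Matrix ι ι R} (hX : IsUnit X) (hY : IsUnit Y) (d : ι → R) :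
    ∃ c : Module.Basis ι R M, ∀ m,
      m ∈ LinearMap.range (Matrix.toLin b b (X * Matrix.diagonal d * Y)) ↔ ∀ i, d i ∣ c.repr m i := by
  obtain ⟨U, rfl⟩ := hX
  obtain ⟨V, rfl⟩ := hY
  let e : M ≃ₗ[R] M := Matrix.toLinOfInv b b U.mul_inv U.inv_mul
  have hV : LinearMap.range (Matrix.toLin b b V) = ⊤ :=
    LinearMap.range_eq_top.2 (Matrix.toLinOfInv b b V.mul_inv V.inv_mul).surjective
  refine ⟨b.map e, fun m => ?_⟩
  rw [Matrix.toLin_mul b b b, Matrix.toLin_mul b b b, LinearMap.range_comp_of_range_eq_top _ hV,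
    LinearMap.range_comp, show Matrix.toLin b b U = (e : M →ₗ[R] M) from rfl, mem_map_equiv,
    b.mem_range_toLin_diagonal_iff, Module.Basis.map_repr]
  rfl

open Polynomial in
theorem LinearMap.charpoly_eq_prod_of_sub_smul_mem_span_Iio [Module.Free R M] [Module.Finite R M]
    [LinearOrder ι] (b : Module.Basis ι R M) (f : M →ₗ[R] M) (μ : ι → R)
    (hf : ∀ j, f (b j) - μ j • b j ∈ span R (b '' Set.Iio j)) :
    f.charpoly = ∏ i, (X - C (μ i)) := by
  have hentry : ∀ i j, ¬ i < j → toMatrix b b f i j = Finsupp.single j (μ j) i := by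
    intro i j hij
    have hsupp : b.repr (f (b j) - μ j • b j) i = 0 := by
      by_contra hne
      exact hij ((b.mem_span_image.1 (hf j)) (Finsupp.mem_support_iff.2 hne))
    rwa [map_sub, map_smul, b.repr_self, Finsupp.smul_single_one, Finsupp.sub_apply,
      sub_eq_zero, ← toMatrix_apply] at hsupp
  have htri : (toMatrix b b f).IsUpperTriangular := fun i j hji =>
    (hentry i j (not_lt_of_gt hji)).trans (Finsupp.single_eq_of_ne (ne_of_gt hji))
  rw [← charpoly_toMatrix f b, Matrix.charpoly_of_isUpperTriangular _ htri]
  simp [hentry]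

end LinearAlgebra

section Roots

open Finset Polynomial

variable {R ι : Type*} [CommRing R] [Fintype ι]

theorem Polynomial.roots_prod_univ_X_sub_C [IsDomain R] (f : ι → R) :
    (∏ i, (X - C (f i))).roots = univ.val.map f := by
  have := roots_multiset_prod_X_sub_C (univ.val.map f)
  rwa [Multiset.map_map, Function.comp_def, ← Finset.prod_eq_multiset_prod] at this

theorem card_filter_natCast_eq_count [DecidableEq R] {p : ℕ} [CharP R p] (a : ι → ℕ)
    (s : ZMod p) :
    #{i | (a i : ZMod p) = s}
      = (univ.val.map fun i => (a i : R)).count (ZMod.castHom (dvd_refl p) R s) := by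
  rw [Multiset.count_map, card_def, filter_val]
  congr 1
  refine Multiset.filter_congr fun i _ => ?_
  rw [eq_comm, ← (ZMod.castHom_injective R).eq_iff, map_natCast]

theorem card_filter_natCast_eq_of_prod_X_sub_C_eq [IsDomain R] {p : ℕ} [CharP R p]
    {a r : ι → ℕ} (h : ∏ i, (X - C (a i : R)) = ∏ i, (X - C (r i : R))) (s : ZMod p) :
    #{i | (a i : ZMod p) = s} = #{i | (r i : ZMod p) = s} := by
  classical
  have hroots := congrArg roots h
  rw [roots_prod_univ_X_sub_C, roots_prod_univ_X_sub_C] at hroots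
  rw [card_filter_natCast_eq_count (R := R), card_filter_natCast_eq_count (R := R), hroots]

end Roots

namespace ModPBK

open PowerSeries

section Reduction

variable {k M ι : Type*} [Field k] [AddCommGroup M] [Module k⟦X⟧ M] [Fintype ι]

theorem mem_uPowSub_iff (c : Module.Basis ι k⟦X⟧ M) (n : ℕ) (m : M) :
    m ∈ (uPowSub n : Submodule k⟦X⟧ M) ↔ ∀ i, X ^ n ∣ c.repr m i :=
  c.mem_range_smul_id_iff _ m

variable [Module k M] [IsScalarTower k k⟦X⟧ M]

theorem C_smul (a : k) (m : M) : C a • m = a • m :=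
  algebraMap_smul k⟦X⟧ a m

theorem mkQ_uPowSub_one_smul (f : k⟦X⟧) (m : M) :
    (uPowSub 1 : Submodule k⟦X⟧ M).mkQ (f • m)
      = constantCoeff f • (uPowSub 1 : Submodule k⟦X⟧ M).mkQ m := by
  obtain ⟨t, ht⟩ : X ∣ f - C (constantCoeff f) := by simp [X_dvd_iff]
  have hX : (uPowSub 1 : Submodule k⟦X⟧ M).mkQ ((X * t) • m) = 0 :=
    (Submodule.Quotient.mk_eq_zero _).2 ⟨t • m, by simp [mul_smul, smul_comm t X m]⟩
  rw [← sub_add_cancel f (C (constantCoeff f)), ht, add_smul, map_add, hX, zero_add, C_smul,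
    LinearMap.map_smul_of_tower]
  simp

theorem mkQ_uPowSub_one_eq_sum (c : Module.Basis ι k⟦X⟧ M) (m : M) :
    (uPowSub 1 : Submodule k⟦X⟧ M).mkQ m
      = ∑ i, constantCoeff (c.repr m i) • (uPowSub 1 : Submodule k⟦X⟧ M).mkQ (c i) := by
  conv_lhs => rw [← c.sum_repr m]
  simp only [map_sum, mkQ_uPowSub_one_smul]

theorem linearIndependent_mkQ_uPowSub_one (c : Module.Basis ι k⟦X⟧ M) :
    LinearIndependent k fun i => (uPowSub 1 : Submodule k⟦X⟧ M).mkQ (c i) := by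
  classical
  refine Fintype.linearIndependent_iff.2 fun g hg i => ?_
  have hmem : ∑ j, C (g j) • c j ∈ (uPowSub 1 : Submodule k⟦X⟧ M) := by
    rw [← Submodule.Quotient.mk_eq_zero, ← Submodule.mkQ_apply, map_sum]
    simpa only [mkQ_uPowSub_one_smul, constantCoeff_C] using hg
  have hdvd := (mem_uPowSub_iff c 1 _).1 hmem i
  rwa [c.repr_sum_self, pow_one, X_dvd_iff, constantCoeff_C] at hdvd

def reductionBasis (c : Module.Basis ι k⟦X⟧ M) :
    Module.Basis ι k (M ⧸ (uPowSub 1 : Submodule k⟦X⟧ M)) :=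
  .mk (linearIndependent_mkQ_uPowSub_one c) fun x _ => by
    obtain ⟨m, rfl⟩ := Submodule.mkQ_surjective _ x
    rw [mkQ_uPowSub_one_eq_sum c m]
    exact Submodule.sum_mem _ fun i _ => Submodule.smul_mem _ _ (Submodule.subset_span ⟨i, rfl⟩)

@[simp]
theorem reductionBasis_apply (c : Module.Basis ι k⟦X⟧ M) (i : ι) :
    reductionBasis c i = (uPowSub 1 : Submodule k⟦X⟧ M).mkQ (c i) :=
  Module.Basis.mk_apply _ _ _

end Reduction

section Filtration

variable {k M ι : Type*} [Field k] [AddCommGroup M] [Module k⟦X⟧ M] [Module k M]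
  [IsScalarTower k k⟦X⟧ M] [Fintype ι] {φ : k⟦X⟧ →+* k⟦X⟧} {φM : M →ₛₗ[φ] M}
  {c : Module.Basis ι k⟦X⟧ M} {a : ι → ℕ}

theorem restrictScalars_filHT_eq_span (hc : ∀ m, m ∈ star φM ↔ ∀ i, X ^ a i ∣ c.repr m i)
    (n : ℕ) : (filHT φM n).restrictScalars k = span k (reductionBasis c '' {i | a i ≤ n}) := by
  classical
  refine le_antisymm ?_ (span_le.2 ?_)
  · rintro _ ⟨y, hy, rfl⟩
    have hdvd : ∀ i, X ^ a i ∣ X ^ n * c.repr y i := by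
      simpa using (hc _).1 (mem_comap.1 hy)
    rw [mkQ_uPowSub_one_eq_sum c y]
    refine sum_mem fun i _ => ?_
    by_cases hi : a i ≤ n
    · exact smul_mem _ _ (subset_span ⟨i, hi, reductionBasis_apply c i⟩)
    · have hX : X ∣ c.repr y i := by
        rw [← mul_dvd_mul_iff_left (pow_ne_zero n (X_ne_zero (R := k))), ← pow_succ]
        exact (pow_dvd_pow X (not_le.1 hi)).trans (hdvd i)
      rw [X_dvd_iff.1 hX, zero_smul]
      exact zero_mem _
  · rintro _ ⟨i, hi, rfl⟩
    rw [SetLike.mem_coe, Submodule.restrictScalars_mem, reductionBasis_apply]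
    refine mem_map_of_mem (mem_comap.2 ((hc _).2 fun j => ?_))
    rw [LinearMap.smul_apply, LinearMap.id_apply, map_smul, c.repr_self, Finsupp.smul_apply,
      Finsupp.single_apply]
    split_ifs with hij
    · subst hij
      simpa using pow_dvd_pow X hi
    · simp

theorem sub_natCast_smul_reductionBasis_mem_span_Iio [LinearOrder ι]
    (hc : ∀ m, m ∈ star φM ↔ ∀ i, X ^ a i ∣ c.repr m i) (ha : Monotone a)
    (θ : (M ⧸ (uPowSub 1 : Submodule k⟦X⟧ M)) →ₗ[k] (M ⧸ (uPowSub 1 : Submodule k⟦X⟧ M)))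
    (hshift : ∀ n : ℕ, ∀ x ∈ filHT φM n,
      θ x - (n : k) • x ∈ (if n = 0 then ⊥ else filHT φM (n - 1)))
    (j : ι) :
    θ (reductionBasis c j) - (a j : k) • reductionBasis c j
      ∈ span k (reductionBasis c '' Set.Iio j) := by
  have hfil := restrictScalars_filHT_eq_span hc
  have hj : reductionBasis c j ∈ filHT φM (a j) := by
    rw [← restrictScalars_mem k, hfil]
    exact subset_span ⟨j, le_refl (a j), rfl⟩
  have hshift_j := hshift _ _ hj
  split_ifs at hshift_j with h0
  · rw [(mem_bot k).1 hshift_j]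
    exact zero_mem _
  · rw [← restrictScalars_mem k, hfil] at hshift_j
    refine span_mono (Set.image_mono fun i hi => ha.reflect_lt ?_) hshift_j
    replace hi : a i ≤ a j - 1 := hi
    omega

end Filtration
end ModPBK

theorem elementary_divisors_mod_p_general
    {p : ℕ} {k : Type*} [Field k] [CharP k p]
    (φ : PowerSeries k →+* PowerSeries k)
    {Mb : Type*} [AddCommGroup Mb] [Module (PowerSeries k) Mb]
    [Module k Mb] [IsScalarTower k (PowerSeries k) Mb]
    (d : ℕ) (bM : Module.Basis (Fin d) (PowerSeries k) Mb)
    (φM : Mb →ₛₗ[φ] Mb)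
    -- elementary divisor exponents `a_i` of `M̄`
    (A : Matrix (Fin d) (Fin d) (PowerSeries k))
    (hA : ∀ j, φM (bM j) = ∑ i, A i j • bM i)
    (X Y : Matrix (Fin d) (Fin d) (PowerSeries k))
    (hX : IsUnit X) (hY : IsUnit Y)
    (a : Fin d → ℕ) (ha : Monotone a)
    (hdec : A = X * Matrix.diagonal (fun i => (PowerSeries.X : PowerSeries k) ^ a i) * Y)
    -- the mod `p` Sen operator `θ` on `M̄_HT`
    (r : Fin d → ℕ)
    (θ : (Mb ⧸ (uPowSub 1 : Submodule (PowerSeries k) Mb)) →ₗ[k]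
      (Mb ⧸ (uPowSub 1 : Submodule (PowerSeries k) Mb)))
    [Module.Finite k (Mb ⧸ (uPowSub 1 : Submodule (PowerSeries k) Mb))]
    (hshift : ∀ n : ℕ, ∀ x ∈ filHT φM n,
      θ x - (n : k) • x ∈ (if n = 0 then ⊥ else filHT φM (n - 1)))
    (hchar : LinearMap.charpoly θ
      = ∏ i : Fin d, (Polynomial.X - Polynomial.C ((r i : k)))) :
    -- `{a_1, …, a_d} ≡ {r_1, …, r_d} (mod p)` as multisets
    ∀ s : ZMod p,
      (Finset.univ.filter (fun i : Fin d => ((a i : ZMod p) = s))).card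
        = (Finset.univ.filter (fun i : Fin d => ((r i : ZMod p) = s))).card := by
  obtain ⟨c, hc⟩ := exists_basis_mem_range_toLin_iff_dvd bM hX hY
    fun i => (PowerSeries.X : PowerSeries k) ^ a i
  rw [← hdec, ← bM.span_range_eq_range_toLin φM A hA] at hc
  have hcp := θ.charpoly_eq_prod_of_sub_smul_mem_span_Iio (reductionBasis c) _
    (sub_natCast_smul_reductionBasis_mem_span_Iio hc ha θ hshift)
  exact card_filter_natCast_eq_of_prod_X_sub_C_eq (hcp.symm.trans hchar)

theorem elementary_divisors_mod_p
    {p : ℕ} [Fact p.Prime] {k : Type*} [Field k] [CharP k p]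
    [ExpChar k p] [PerfectRing k p]
    (φ : PowerSeries k →+* PowerSeries k)
    (hφ : ∀ (f : PowerSeries k) (n : ℕ),
      PowerSeries.coeff (R := k) (p * n) (φ f) = (PowerSeries.coeff (R := k) n f) ^ p)
    (hφ' : ∀ (f : PowerSeries k) (m : ℕ), ¬ p ∣ m → PowerSeries.coeff (R := k) m (φ f) = 0)
    {Mb : Type*} [AddCommGroup Mb] [Module (PowerSeries k) Mb]
    [Module k Mb] [IsScalarTower k (PowerSeries k) Mb]
    (d : ℕ) (bM : Module.Basis (Fin d) (PowerSeries k) Mb)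
    (φM : Mb →ₛₗ[φ] Mb)
    (hinj : LinearIndependent (PowerSeries k) fun i => φM (bM i))
    (h : ℕ)
    (hcoker : ∀ m : Mb, (PowerSeries.X ^ h : PowerSeries k) • m ∈ star φM)
    -- elementary divisor exponents `a_i` of `M̄`
    (A : Matrix (Fin d) (Fin d) (PowerSeries k))
    (hA : ∀ j, φM (bM j) = ∑ i, A i j • bM i)
    (X Y : Matrix (Fin d) (Fin d) (PowerSeries k))
    (hX : IsUnit X) (hY : IsUnit Y)
    (a : Fin d → ℕ) (ha : Monotone a)
    (hdec : A = X * Matrix.diagonal (fun i => (PowerSeries.X : PowerSeries k) ^ a i) * Y)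
    -- the mod `p` Sen operator `θ` on `M̄_HT`
    (r : Fin d → ℕ) (hr : Monotone r)
    (θ : (Mb ⧸ (uPowSub 1 : Submodule (PowerSeries k) Mb)) →ₗ[k]
      (Mb ⧸ (uPowSub 1 : Submodule (PowerSeries k) Mb)))
    [Module.Finite k (Mb ⧸ (uPowSub 1 : Submodule (PowerSeries k) Mb))]
    (hstab : ∀ n : ℕ, ∀ x ∈ filHT φM n, θ x ∈ filHT φM n)
    (hshift : ∀ n : ℕ, ∀ x ∈ filHT φM n,
      θ x - (n : k) • x ∈ (if n = 0 then ⊥ else filHT φM (n - 1)))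
    (hchar : LinearMap.charpoly θ
      = ∏ i : Fin d, (Polynomial.X - Polynomial.C ((r i : k)))) :
    -- `{a_1, …, a_d} ≡ {r_1, …, r_d} (mod p)` as multisets
    ∀ s : ZMod p,
      (Finset.univ.filter (fun i : Fin d => ((a i : ZMod p) = s))).card
        = (Finset.univ.filter (fun i : Fin d => ((r i : ZMod p) = s))).card :=
  elementary_divisors_mod_p_general φ d bM φM A hA X Y hX hY a ha hdec r θ hshift hchar
end
end

section
/- Lemma (Horizontal vs. vertical torsion, paper Lemma 7.9, in the saturation form in which it is proved and applied). Let R be a discrete valuation ring with uniformizer π. (Decreasing version) Let N be a finitely generated R-module with a decreasing filtration N = Fil^0 ⊇ Fil^1 ⊇ … by submodules with Fil^i = 0 for i > h, and for each i set Sat^i := {x ∈ N : π^m·x ∈ Fil^i for some m ≥ 0}. Then: (1) if Sat^i/Fil^i and Sat^{i+1}/Fil^{i+1} are both killed by π^n, then the torsion submodule of Fil^i/Fil^{i+1} is killed by π^n; (2) if for every i the torsion submodule of Fil^i/Fil^{i+1} is killed by π^n, then Sat^i/Fil^i is killed by π^{i·n}; in particular, if every graded piece Fil^i/Fil^{i+1}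 is torsion-free then Fil^i = Sat^i for all i. (Increasing version) Let N be a finitely generated R-module with an increasing filtration 0 = Fil_{−1} ⊆ Fil_0 ⊆ … ⊆ Fil_h = N, and Sat_i := {x ∈ N : π^m·x ∈ Fil_i for some m ≥ 0}. Then: (3) if Sat_{i−1}/Fil_{i−1} and Sat_i/Fil_i are both killed by π^n, then the torsion submodule of Fil_i/Fil_{i−1} is killed by π^n; (4) if for every i the torsion submodule of Fil_i/Fil_{i−1} is killed by π^n, then Sat_i/Fil_i is killed by π^{(h−i)·n}; in particular, if every graded piece is torsion-free then Fil_i = Sat_i for all i. -/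
/-!
If `x` has some `a`-power in `Fil^{i+1} ⊆ Fil^i`, then by induction `a^{i n} x ∈ Fil^i`, so
`a^{i n} x` is an `a`-power torsion class of `Fil^i / Fil^{i+1}` and one more factor `a^n`
pushes it into `Fil^{i+1}`. The increasing version is the decreasing one for `j ↦ Fil_{h-j}`, and the
torsion-free statements are the case `n = 0`.
-/

namespace Submodule

variable {R M : Type*} [CommSemiring R] [AddCommMonoid M] [Module R M]
  {a : R} {n k : ℕ} {p q : Submodule R M}

/-- `a ^ n` kills `Sat p / p`, where `Sat p = {x | ∃ m, a ^ m • x ∈ p}`. -/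
def SaturationKilledBy (a : R) (n : ℕ) (p : Submodule R M) : Prop :=
  ∀ x : M, (∃ m : ℕ, a ^ m • x ∈ p) → a ^ n • x ∈ p

/-- `a ^ n` kills the `a`-power torsion of `q ⧸ p`. -/
def TorsionKilledBy (a : R) (n : ℕ) (q p : Submodule R M) : Prop :=
  ∀ x ∈ q, (∃ m : ℕ, a ^ m • x ∈ p) → a ^ n • x ∈ p

theorem saturationKilledBy_zero_iff :
    SaturationKilledBy a 0 p ↔ ∀ x : M, (∃ m : ℕ, a ^ m • x ∈ p) → x ∈ p := by
  simp only [SaturationKilledBy, pow_zero, one_smul]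

theorem torsionKilledBy_zero_iff :
    TorsionKilledBy a 0 q p ↔ ∀ x ∈ q, (∃ m : ℕ, a ^ m • x ∈ p) → x ∈ p := by
  simp only [TorsionKilledBy, pow_zero, one_smul]

theorem saturationKilledBy_top : SaturationKilledBy a n (⊤ : Submodule R M) :=
  fun _ _ => trivial

theorem torsionKilledBy_of_le (hqp : q ≤ p) : TorsionKilledBy a n q p :=
  fun _ hx _ => p.smul_mem _ (hqp hx)

theorem SaturationKilledBy.torsionKilledBy (hp : SaturationKilledBy a n p) :
    TorsionKilledBy a n q p :=
  fun x _ => hp x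

theorem SaturationKilledBy.of_torsionKilledBy (hpq : p ≤ q) (hgr : TorsionKilledBy a n q p)
    (hq : SaturationKilledBy a k q) : SaturationKilledBy a (n + k) p := by
  rintro x ⟨m, hm⟩
  have hxq : a ^ k • x ∈ q := hq x ⟨m, hpq hm⟩
  have hmp : a ^ m • a ^ k • x ∈ p := by
    rw [smul_comm]
    exact p.smul_mem _ hm
  rw [pow_add, mul_smul]
  exact hgr _ hxq ⟨m, hmp⟩

theorem saturationKilledBy_of_antitone {F : ℕ → Submodule R M} (hF : Antitone F)
    (h0 : F 0 = ⊤) (hgr : ∀ i, TorsionKilledBy a n (F i) (F (i + 1))) (i : ℕ) :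
    SaturationKilledBy a (i * n) (F i) := by
  induction i with
  | zero => simpa [h0] using saturationKilledBy_top
  | succ i ih =>
    rw [Nat.succ_mul, add_comm]
    exact ih.of_torsionKilledBy (hF i.le_succ) (hgr i)

theorem saturationKilledBy_of_monotone {F : ℕ → Submodule R M} {h : ℕ} (hF : Monotone F)
    (hh : F h = ⊤) (hgr : ∀ i, TorsionKilledBy a n (F (i + 1)) (F i)) (i : ℕ) :
    SaturationKilledBy a ((h - i) * n) (F i) := by
  by_cases hi : i ≤ h
  · have hrev : ∀ j, TorsionKilledBy a n (F (h - j)) (F (h - (j + 1))) := by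
      intro j
      by_cases hj : j < h
      · simpa [show h - j = h - (j + 1) + 1 by omega] using hgr (h - (j + 1))
      · exact torsionKilledBy_of_le (hF (by omega))
    have := saturationKilledBy_of_antitone (fun j k hjk => hF (by omega))
      (by simpa using hh) hrev (h - i)
    rwa [Nat.sub_sub_self hi] at this
  · have hFi : F i = ⊤ := top_unique (hh ▸ hF (by omega : h ≤ i))
    simpa [hFi] using saturationKilledBy_top

end Submodule

open Submodule

theorem horizontal_vs_vertical_torsion_general
    {R : Type*} [CommRing R]
    (π : R)
    {N : Type*} [AddCommGroup N] [Module R N]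
    (h : ℕ) :
    -- Decreasing version: `N = Fil^0 ⊇ Fil^1 ⊇ ⋯`, `Fil^i = 0` for `i > h`.
    -- (1)
    (∀ Fil : ℕ → Submodule R N, Antitone Fil → Fil 0 = ⊤ → (∀ i, h < i → Fil i = ⊥) →
      ∀ (i n : ℕ),
        (∀ x : N, (∃ m : ℕ, π ^ m • x ∈ Fil i) → π ^ n • x ∈ Fil i) →
        (∀ x : N, (∃ m : ℕ, π ^ m • x ∈ Fil (i + 1)) → π ^ n • x ∈ Fil (i + 1)) →
        ∀ x ∈ Fil i, (∃ m : ℕ, π ^ m • x ∈ Fil (i + 1)) → π ^ n • x ∈ Fil (i + 1)) ∧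
    -- (2)
    (∀ Fil : ℕ → Submodule R N, Antitone Fil → Fil 0 = ⊤ → (∀ i, h < i → Fil i = ⊥) →
      ∀ n : ℕ,
        (∀ i : ℕ, ∀ x ∈ Fil i, (∃ m : ℕ, π ^ m • x ∈ Fil (i + 1)) →
          π ^ n • x ∈ Fil (i + 1)) →
        ∀ (i : ℕ) (x : N), (∃ m : ℕ, π ^ m • x ∈ Fil i) → π ^ (i * n) • x ∈ Fil i) ∧
    -- (2), "in particular": if every graded piece is torsion-free then `Fil^i = Sat^i`
    (∀ Fil : ℕ → Submodule R N, Antitone Fil → Fil 0 = ⊤ → (∀ i, h < i → Fil i = ⊥) →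
      (∀ i : ℕ, ∀ x ∈ Fil i, (∃ m : ℕ, π ^ m • x ∈ Fil (i + 1)) → x ∈ Fil (i + 1)) →
      ∀ (i : ℕ) (x : N), (∃ m : ℕ, π ^ m • x ∈ Fil i) → x ∈ Fil i) ∧
    -- Increasing version: `0 = Fil_{-1} ⊆ Fil_0 ⊆ ⋯ ⊆ Fil_h = N`
    -- (with `Fil_{i-1}` interpreted as `⊥` for `i = 0`).
    -- (3)
    (∀ Fil : ℕ → Submodule R N, Monotone Fil → Fil h = ⊤ →
      ∀ (i n : ℕ),
        (∀ x : N, (∃ m : ℕ, π ^ m • x ∈ (if i = 0 then (⊥ : Submodule R N) else Fil (i - 1))) →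
          π ^ n • x ∈ (if i = 0 then (⊥ : Submodule R N) else Fil (i - 1))) →
        (∀ x : N, (∃ m : ℕ, π ^ m • x ∈ Fil i) → π ^ n • x ∈ Fil i) →
        ∀ x ∈ Fil i,
          (∃ m : ℕ, π ^ m • x ∈ (if i = 0 then (⊥ : Submodule R N) else Fil (i - 1))) →
          π ^ n • x ∈ (if i = 0 then (⊥ : Submodule R N) else Fil (i - 1))) ∧
    -- (4)
    (∀ Fil : ℕ → Submodule R N, Monotone Fil → Fil h = ⊤ →
      ∀ n : ℕ,
        (∀ i : ℕ, ∀ x ∈ Fil i,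
          (∃ m : ℕ, π ^ m • x ∈ (if i = 0 then (⊥ : Submodule R N) else Fil (i - 1))) →
          π ^ n • x ∈ (if i = 0 then (⊥ : Submodule R N) else Fil (i - 1))) →
        ∀ (i : ℕ) (x : N), (∃ m : ℕ, π ^ m • x ∈ Fil i) → π ^ ((h - i) * n) • x ∈ Fil i) ∧
    -- (4), "in particular": if every graded piece is torsion-free then `Fil_i = Sat_i`
    (∀ Fil : ℕ → Submodule R N, Monotone Fil → Fil h = ⊤ →
      (∀ i : ℕ, ∀ x ∈ Fil i,
        (∃ m : ℕ, π ^ m • x ∈ (if i = 0 then (⊥ : Submodule R N) else Fil (i - 1))) →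
        x ∈ (if i = 0 then (⊥ : Submodule R N) else Fil (i - 1))) →
      ∀ (i : ℕ) (x : N), (∃ m : ℕ, π ^ m • x ∈ Fil i) → x ∈ Fil i) := by
  have torsion_step : ∀ (Fil : ℕ → Submodule R N) (i n : ℕ),
      (∀ x ∈ Fil (i + 1), (∃ m : ℕ, π ^ m • x ∈
        (if i + 1 = 0 then (⊥ : Submodule R N) else Fil (i + 1 - 1))) →
        π ^ n • x ∈ (if i + 1 = 0 then (⊥ : Submodule R N) else Fil (i + 1 - 1))) →
      TorsionKilledBy π n (Fil (i + 1)) (Fil i) := by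
    simp only [Nat.add_one_ne_zero, if_false, Nat.add_sub_cancel]
    exact fun _ _ _ hgr => hgr
  refine ⟨?_, ?_, ?_, ?_, ?_, ?_⟩
  · exact fun Fil _ _ _ i n _ hsat => SaturationKilledBy.torsionKilledBy hsat
  · exact fun Fil hF h0 _ n hgr => saturationKilledBy_of_antitone hF h0 hgr
  · intro Fil hF h0 _ hgr i
    refine saturationKilledBy_zero_iff.1 ?_
    simpa only [mul_zero] using
      saturationKilledBy_of_antitone hF h0 (fun j => torsionKilledBy_zero_iff.2 (hgr j)) i
  · exact fun Fil _ _ i n hsat _ => SaturationKilledBy.torsionKilledBy hsat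
  · exact fun Fil hF hh n hgr =>
      saturationKilledBy_of_monotone hF hh fun i => torsion_step Fil i n (hgr (i + 1))
  · intro Fil hF hh hgr i
    refine saturationKilledBy_zero_iff.1 ?_
    simpa only [mul_zero] using saturationKilledBy_of_monotone hF hh
      (fun j => torsion_step Fil j 0 (by simpa only [pow_zero, one_smul] using hgr (j + 1))) i

theorem horizontal_vs_vertical_torsion
    {R : Type*} [CommRing R] [IsDomain R] [IsDiscreteValuationRing R]
    (π : R) (hπ : Irreducible π)
    {N : Type*} [AddCommGroup N] [Module R N] [Module.Finite R N]
    (h : ℕ) :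
    -- Decreasing version: `N = Fil^0 ⊇ Fil^1 ⊇ ⋯`, `Fil^i = 0` for `i > h`.
    -- (1)
    (∀ Fil : ℕ → Submodule R N, Antitone Fil → Fil 0 = ⊤ → (∀ i, h < i → Fil i = ⊥) →
      ∀ (i n : ℕ),
        (∀ x : N, (∃ m : ℕ, π ^ m • x ∈ Fil i) → π ^ n • x ∈ Fil i) →
        (∀ x : N, (∃ m : ℕ, π ^ m • x ∈ Fil (i + 1)) → π ^ n • x ∈ Fil (i + 1)) →
        ∀ x ∈ Fil i, (∃ m : ℕ, π ^ m • x ∈ Fil (i + 1)) → π ^ n • x ∈ Fil (i + 1)) ∧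
    -- (2)
    (∀ Fil : ℕ → Submodule R N, Antitone Fil → Fil 0 = ⊤ → (∀ i, h < i → Fil i = ⊥) →
      ∀ n : ℕ,
        (∀ i : ℕ, ∀ x ∈ Fil i, (∃ m : ℕ, π ^ m • x ∈ Fil (i + 1)) →
          π ^ n • x ∈ Fil (i + 1)) →
        ∀ (i : ℕ) (x : N), (∃ m : ℕ, π ^ m • x ∈ Fil i) → π ^ (i * n) • x ∈ Fil i) ∧
    -- (2), "in particular": if every graded piece is torsion-free then `Fil^i = Sat^i`
    (∀ Fil : ℕ → Submodule R N, Antitone Fil → Fil 0 = ⊤ → (∀ i, h < i → Fil i = ⊥) →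
      (∀ i : ℕ, ∀ x ∈ Fil i, (∃ m : ℕ, π ^ m • x ∈ Fil (i + 1)) → x ∈ Fil (i + 1)) →
      ∀ (i : ℕ) (x : N), (∃ m : ℕ, π ^ m • x ∈ Fil i) → x ∈ Fil i) ∧
    -- Increasing version: `0 = Fil_{-1} ⊆ Fil_0 ⊆ ⋯ ⊆ Fil_h = N`
    -- (with `Fil_{i-1}` interpreted as `⊥` for `i = 0`).
    -- (3)
    (∀ Fil : ℕ → Submodule R N, Monotone Fil → Fil h = ⊤ →
      ∀ (i n : ℕ),
        (∀ x : N, (∃ m : ℕ, π ^ m • x ∈ (if i = 0 then (⊥ : Submodule R N) else Fil (i - 1))) →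
          π ^ n • x ∈ (if i = 0 then (⊥ : Submodule R N) else Fil (i - 1))) →
        (∀ x : N, (∃ m : ℕ, π ^ m • x ∈ Fil i) → π ^ n • x ∈ Fil i) →
        ∀ x ∈ Fil i,
          (∃ m : ℕ, π ^ m • x ∈ (if i = 0 then (⊥ : Submodule R N) else Fil (i - 1))) →
          π ^ n • x ∈ (if i = 0 then (⊥ : Submodule R N) else Fil (i - 1))) ∧
    -- (4)
    (∀ Fil : ℕ → Submodule R N, Monotone Fil → Fil h = ⊤ →
      ∀ n : ℕ,
        (∀ i : ℕ, ∀ x ∈ Fil i,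
          (∃ m : ℕ, π ^ m • x ∈ (if i = 0 then (⊥ : Submodule R N) else Fil (i - 1))) →
          π ^ n • x ∈ (if i = 0 then (⊥ : Submodule R N) else Fil (i - 1))) →
        ∀ (i : ℕ) (x : N), (∃ m : ℕ, π ^ m • x ∈ Fil i) → π ^ ((h - i) * n) • x ∈ Fil i) ∧
    -- (4), "in particular": if every graded piece is torsion-free then `Fil_i = Sat_i`
    (∀ Fil : ℕ → Submodule R N, Monotone Fil → Fil h = ⊤ →
      (∀ i : ℕ, ∀ x ∈ Fil i,
        (∃ m : ℕ, π ^ m • x ∈ (if i = 0 then (⊥ : Submodule R N) else Fil (i - 1))) →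
        x ∈ (if i = 0 then (⊥ : Submodule R N) else Fil (i - 1))) →
      ∀ (i : ℕ) (x : N), (∃ m : ℕ, π ^ m • x ∈ Fil i) → x ∈ Fil i) :=
  horizontal_vs_vertical_torsion_general π h
end

section
/- Lemma (paper Lemma 8.6, sandwiching of filtrations). Let P and Q be finite-dimensional vector spaces over a field, of the same dimension, and let h ≥ 0. Suppose given: a decreasing filtration P = P^0 ⊇ P^1 ⊇ … ⊇ P^h ⊇ P^{h+1} = 0 and an increasing filtration 0 = Q_{−1} ⊆ Q_0 ⊆ … ⊆ Q_h = Q such that dim P^i/P^{i+1} = dim Q_i/Q_{i−1} for every i; and sub-filtrations: a decreasing filtration P = P̃^0 ⊇ P̃^1 ⊇ … ⊇ P̃^h ⊇ P̃^{h+1} = 0 with P̃^i ⊆ P^i for every i, and an increasing filtration 0 = Q̃_{−1} ⊆ Q̃_0 ⊆ … ⊆ Q̃_h = Q with Q̃_i ⊆ Q_i for every i, such that dim P̃^i/P̃^{i+1} = dim Q̃_i/Q̃_{i−1} for every i. Then P̃^i = P^i and Q̃_i = Q_i for every i. -/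
/-!
Statement 15 (paper Lemma 8.6, sandwiching of filtrations).

`P` and `Q` are finite-dimensional vector spaces over a field, of the same
dimension.  `Pfil` is a decreasing filtration `P = P^0 ⊇ ⋯ ⊇ P^h ⊇ P^{h+1} = 0`,
`Qfil` an increasing filtration `0 = Q_{-1} ⊆ Q_0 ⊆ ⋯ ⊆ Q_h = Q`, with matching
graded dimensions; `P'fil ⊆ Pfil` and `Q'fil ⊆ Qfil` are sub-filtrations of the
same shape, also with matching graded dimensions.  Then the sub-filtrations coincide
with the original ones.
-/

open Submodule

noncomputable section


lemma aux_quot_rank {K V : Type*} [Field K] [AddCommGroup V] [Module K V]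
    [FiniteDimensional K V] {N M : Submodule K V} (hle : N ≤ M) :
    Module.finrank K (↥M ⧸ Submodule.comap M.subtype N) + Module.finrank K N
      = Module.finrank K M := by
  rw [← LinearEquiv.finrank_eq (Submodule.comapSubtypeEquivOfLe hle)]
  exact Submodule.finrank_quotient_add_finrank _

theorem sandwiching_of_filtrations
    {K : Type*} [Field K]
    {P : Type*} [AddCommGroup P] [Module K P] [FiniteDimensional K P]
    {Q : Type*} [AddCommGroup Q] [Module K Q] [FiniteDimensional K Q]
    (hdim : Module.finrank K P = Module.finrank K Q)
    (h : ℕ)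
    (Pfil : ℕ → Submodule K P) (hPanti : Antitone Pfil)
    (hP0 : Pfil 0 = ⊤) (hPend : Pfil (h + 1) = ⊥)
    (Qfil : ℕ → Submodule K Q) (hQmono : Monotone Qfil) (hQtop : Qfil h = ⊤)
    -- matching graded dimensions: `dim P^i/P^{i+1} = dim Q_i/Q_{i-1}` for every `i`
    (hgr : ∀ i : ℕ,
      Module.finrank K (↥(Pfil i) ⧸ Submodule.comap (Pfil i).subtype (Pfil (i + 1)))
        = Module.finrank K (↥(Qfil i) ⧸ Submodule.comap (Qfil i).subtype
            (if i = 0 then ⊥ else Qfil (i - 1))))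
    -- the sub-filtrations
    (P'fil : ℕ → Submodule K P) (hP'anti : Antitone P'fil)
    (hP'0 : P'fil 0 = ⊤) (hP'end : P'fil (h + 1) = ⊥)
    (hP'le : ∀ i, P'fil i ≤ Pfil i)
    (Q'fil : ℕ → Submodule K Q) (hQ'mono : Monotone Q'fil) (hQ'top : Q'fil h = ⊤)
    (hQ'le : ∀ i, Q'fil i ≤ Qfil i)
    -- matching graded dimensions of the sub-filtrations
    (hgr' : ∀ i : ℕ,
      Module.finrank K (↥(P'fil i) ⧸ Submodule.comap (P'fil i).subtype (P'fil (i + 1)))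
        = Module.finrank K (↥(Q'fil i) ⧸ Submodule.comap (Q'fil i).subtype
            (if i = 0 then ⊥ else Q'fil (i - 1)))) :
    ∀ i : ℕ, P'fil i = Pfil i ∧ Q'fil i = Qfil i := by
  set n := Module.finrank K P with hn
  have eqP : ∀ i, Module.finrank K (↥(Pfil i) ⧸ Submodule.comap (Pfil i).subtype (Pfil (i + 1)))
      + Module.finrank K (Pfil (i+1)) = Module.finrank K (Pfil i) :=
    fun i => aux_quot_rank (hPanti (Nat.le_succ i))
  have eqP' : ∀ i, Module.finrank K (↥(P'fil i) ⧸ Submodule.comap (P'fil i).subtype (P'fil (i + 1)))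
      + Module.finrank K (P'fil (i+1)) = Module.finrank K (P'fil i) :=
    fun i => aux_quot_rank (hP'anti (Nat.le_succ i))
  have eqQ0 : Module.finrank K (↥(Qfil 0) ⧸ Submodule.comap (Qfil 0).subtype
        (if 0 = 0 then ⊥ else Qfil (0 - 1)))
      + Module.finrank K (⊥ : Submodule K Q) = Module.finrank K (Qfil 0) :=
    aux_quot_rank bot_le
  have eqQs : ∀ i : ℕ, Module.finrank K (↥(Qfil (i+1)) ⧸ Submodule.comap (Qfil (i+1)).subtype
        (if i + 1 = 0 then ⊥ else Qfil (i + 1 - 1)))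
      + Module.finrank K (Qfil i) = Module.finrank K (Qfil (i+1)) :=
    fun i => aux_quot_rank (hQmono (Nat.le_succ i))
  have eqQ0' : Module.finrank K (↥(Q'fil 0) ⧸ Submodule.comap (Q'fil 0).subtype
        (if 0 = 0 then ⊥ else Q'fil (0 - 1)))
      + Module.finrank K (⊥ : Submodule K Q) = Module.finrank K (Q'fil 0) :=
    aux_quot_rank bot_le
  have eqQs' : ∀ i : ℕ, Module.finrank K (↥(Q'fil (i+1)) ⧸ Submodule.comap (Q'fil (i+1)).subtype
        (if i + 1 = 0 then ⊥ else Q'fil (i + 1 - 1)))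
      + Module.finrank K (Q'fil i) = Module.finrank K (Q'fil (i+1)) :=
    fun i => aux_quot_rank (hQ'mono (Nat.le_succ i))
  have hb : Module.finrank K (⊥ : Submodule K Q) = 0 := finrank_bot K Q
  have hp0 : Module.finrank K (Pfil 0) = n := by rw [hP0]; exact finrank_top K P
  have hp'0 : Module.finrank K (P'fil 0) = n := by rw [hP'0]; exact finrank_top K P
  have key : ∀ i, i ≤ h → Module.finrank K (Pfil (i+1)) + Module.finrank K (Qfil i) = n := by
    intro i
    induction i with
    | zero =>
      intro _
      have h1 := eqP 0
      have h3 := hgr 0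
      omega
    | succ i ih =>
      intro hih
      have h1 := eqP (i+1)
      have h2 := eqQs i
      have h3 := hgr (i+1)
      have h4 := ih (Nat.le_of_succ_le hih)
      omega
  have key' : ∀ i, i ≤ h → Module.finrank K (P'fil (i+1)) + Module.finrank K (Q'fil i) = n := by
    intro i
    induction i with
    | zero =>
      intro _
      have h1 := eqP' 0
      have h3 := hgr' 0
      omega
    | succ i ih =>
      intro hih
      have h1 := eqP' (i+1)
      have h2 := eqQs' i
      have h3 := hgr' (i+1)
      have h4 := ih (Nat.le_of_succ_le hih)
      omega
  have hQeq : ∀ i, Q'fil i = Qfil i := by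
    intro i
    rcases le_or_gt i h with hi | hi
    · have k1 := key i hi
      have k2 := key' i hi
      have k3 : Module.finrank K (P'fil (i+1)) ≤ Module.finrank K (Pfil (i+1)) :=
        Submodule.finrank_mono (hP'le (i+1))
      exact Submodule.eq_of_le_of_finrank_le (hQ'le i) (by omega)
    · have h1 : Qfil i = ⊤ := top_le_iff.mp (hQtop ▸ hQmono hi.le)
      have h2 : Q'fil i = ⊤ := top_le_iff.mp (hQ'top ▸ hQ'mono hi.le)
      rw [h1, h2]
  have hPeq : ∀ i, P'fil i = Pfil i := by
    intro i
    obtain _ | j := i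
    · rw [hP'0, hP0]
    · rcases le_or_gt j h with hj | hj
      · have k1 := key j hj
        have k2 := key' j hj
        have k3 : Module.finrank K (Q'fil j) ≤ Module.finrank K (Qfil j) :=
          Submodule.finrank_mono (hQ'le j)
        exact Submodule.eq_of_le_of_finrank_le (hP'le (j+1)) (by omega)
      · have h1 : Pfil (j+1) = ⊥ := le_bot_iff.mp (hPend ▸ hPanti (by omega : h + 1 ≤ j + 1))
        have h2 : P'fil (j+1) = ⊥ := le_bot_iff.mp (hP'end ▸ hP'anti (by omega : h + 1 ≤ j + 1))
        rw [h1, h2]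
  exact fun i => ⟨hPeq i, hQeq i⟩
end
end
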